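/- arXiv:1711.03247 — 11 statements merged into one kernel-verified Lean document; each statement's English description precedes it below -/
import Mathlib

section
/- Let g: ℝ^d → ℝ be a ρ-weakly convex function (i.e., g + (ρ/2)‖·‖² is convex) with nonempty set of minimizers 𝒳, and suppose g is sharp: g(x) - min g ≥ μ·dist(x, 𝒳) for all x, where μ, ρ > 0. Then g has no stationary points x (points with 0 ∈ ∂g(x)) satisfying 0 < dist(x, 𝒳) < 2μ/ρ. -/
open scoped InnerProductSpace

/-- The Fréchet subdifferential of `f` at `x`. -/
def frechetSubdiff {d : ℕ} (f : EuclideanSpace ℝ (Fin d) → ℝ) (x : EuclideanSpace ℝ (Fin d)) :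
    Set (EuclideanSpace ℝ (Fin d)) :=
  {v | ∀ ε > (0 : ℝ), ∃ δ > (0 : ℝ), ∀ y, ‖y - x‖ < δ →
      f y ≥ f x + ⟪v, y - x⟫_ℝ - ε * ‖y - x‖}

/-- The limiting subdifferential of `f` at `x`. -/
def limitingSubdiff {d : ℕ} (f : EuclideanSpace ℝ (Fin d) → ℝ) (x : EuclideanSpace ℝ (Fin d)) :
    Set (EuclideanSpace ℝ (Fin d)) :=
  {v | ∃ xs vs : ℕ → EuclideanSpace ℝ (Fin d),
      (∀ n, vs n ∈ frechetSubdiff f (xs n)) ∧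
      Filter.Tendsto xs Filter.atTop (nhds x) ∧
      Filter.Tendsto (fun n => f (xs n)) Filter.atTop (nhds (f x)) ∧
      Filter.Tendsto vs Filter.atTop (nhds v)}

/-!
A stationary point `x` of a `ρ`-weakly convex function is a global minimizer up to the quadratic
term: `g x - ρ/2 ‖y - x‖² ≤ g y` for all `y`. Comparing with a point `y` of the solution set,
sharpness gives `μ · dist(x, 𝒳) ≤ g x - g y ≤ ρ/2 ‖y - x‖²`, and taking the infimum over `y`
yields `μ D ≤ ρ/2 D²` for `D = dist(x, 𝒳)`, i.e. `D = 0` or `D ≥ 2μ/ρ`.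
-/

open Set Filter Topology Metric

section InnerProductSpace

variable {E : Type*} [NormedAddCommGroup E] [InnerProductSpace ℝ E]

def IsFrechetSubgradient (f : E → ℝ) (x v : E) : Prop :=
  ∀ ε > 0, ∀ᶠ y in 𝓝 x, f x + ⟪v, y - x⟫_ℝ - ε * ‖y - x‖ ≤ f y

theorem ConvexOn.add_inner_sub_le_of_isFrechetSubgradient {h : E → ℝ} (hc : ConvexOn ℝ univ h)
    {x w : E} (hw : IsFrechetSubgradient h x w) (y : E) :
    h x + ⟪w, y - x⟫_ℝ ≤ h y := by
  have hslack : ∀ ε > 0, h x + ⟪w, y - x⟫_ℝ - ε * ‖y - x‖ ≤ h y := by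
    intro ε hε
    -- Apply the local inequality at `x + t (y - x)` for small `t`; convexity transports it to `y`.
    have hseg : Tendsto (fun t : ℝ => x + t • (y - x)) (𝓝[>] 0) (𝓝 x) := by
      have : Continuous fun t : ℝ => x + t • (y - x) := by fun_prop
      simpa using (this.tendsto 0).mono_left nhdsWithin_le_nhds
    obtain ⟨t, hloc, ht0, ht1⟩ :=
      ((hseg.eventually (hw ε hε)).and (Ioo_mem_nhdsGT one_pos)).exists
    have hconv : h (x + t • (y - x)) ≤ (1 - t) * h x + t * h y := by
      have hz : x + t • (y - x) = (1 - t) • x + t • y := by module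
      rw [hz]
      exact hc.2 (mem_univ x) (mem_univ y) (by linarith) ht0.le (sub_add_cancel 1 t)
    simp only [add_sub_cancel_left, real_inner_smul_right, norm_smul,
      Real.norm_of_nonneg ht0.le] at hloc
    have : t * (h x + ⟪w, y - x⟫_ℝ - ε * ‖y - x‖) ≤ t * h y := by linarith
    exact le_of_mul_le_mul_left this ht0
  have hlim : Tendsto (fun ε => h x + ⟪w, y - x⟫_ℝ - ε * ‖y - x‖) (𝓝[>] 0)
      (𝓝 (h x + ⟪w, y - x⟫_ℝ)) := by
    have : Continuous fun ε : ℝ => h x + ⟪w, y - x⟫_ℝ - ε * ‖y - x‖ := by fun_prop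
    simpa using (this.tendsto 0).mono_left nhdsWithin_le_nhds
  exact le_of_tendsto hlim (eventually_mem_nhdsWithin.mono hslack)

theorem norm_sq_sub_norm_sq_sub_two_inner (x z : E) :
    ‖z‖ ^ 2 - ‖x‖ ^ 2 - 2 * ⟪x, z - x⟫_ℝ = ‖z - x‖ ^ 2 := by
  rw [norm_sub_sq_real, inner_sub_right, real_inner_self_eq_norm_sq, real_inner_comm]
  ring

/-- `v + ρ x` is a Fréchet subgradient of the convex function `g + ρ/2 ‖·‖²` at `x`. -/
theorem IsFrechetSubgradient.add_inner_sub_sq_le {g : E → ℝ} {ρ : ℝ} (hρ : 0 ≤ ρ)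
    (hwc : ConvexOn ℝ univ (fun y => g y + ρ / 2 * ‖y‖ ^ 2)) {x v : E}
    (hv : IsFrechetSubgradient g x v) (y : E) :
    g x + ⟪v, y - x⟫_ℝ - ρ / 2 * ‖y - x‖ ^ 2 ≤ g y := by
  have hinner : ∀ z, ⟪v + ρ • x, z - x⟫_ℝ = ⟪v, z - x⟫_ℝ + ρ * ⟪x, z - x⟫_ℝ := fun z => by
    rw [inner_add_left, real_inner_smul_left]
  have hsq := norm_sq_sub_norm_sq_sub_two_inner x
  have hconvex := hwc.add_inner_sub_le_of_isFrechetSubgradient (w := v + ρ • x) (fun ε hε =>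
    (hv ε hε).mono fun z hz => by
      have : 0 ≤ ρ / 2 * ‖z - x‖ ^ 2 := by positivity
      nlinarith [hinner z, hsq z]) y
  nlinarith [hinner y, hsq y]

end InnerProductSpace

theorem isFrechetSubgradient_of_mem_frechetSubdiff {d : ℕ} {f : EuclideanSpace ℝ (Fin d) → ℝ}
    {x v : EuclideanSpace ℝ (Fin d)} (hv : v ∈ frechetSubdiff f x) :
    IsFrechetSubgradient f x v := fun ε hε => by
  obtain ⟨δ, hδ, H⟩ := hv ε hε
  exact Metric.eventually_nhds_iff.2 ⟨δ, hδ, fun y hy => H y (by rwa [← dist_eq_norm])⟩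

theorem add_inner_sub_sq_le_of_mem_limitingSubdiff {d : ℕ} {g : EuclideanSpace ℝ (Fin d) → ℝ}
    {ρ : ℝ} (hρ : 0 ≤ ρ) (hwc : ConvexOn ℝ univ (fun y => g y + ρ / 2 * ‖y‖ ^ 2))
    {x v : EuclideanSpace ℝ (Fin d)} (hv : v ∈ limitingSubdiff g x) (y : EuclideanSpace ℝ (Fin d)) :
    g x + ⟪v, y - x⟫_ℝ - ρ / 2 * ‖y - x‖ ^ 2 ≤ g y := by
  obtain ⟨xs, vs, hfs, hxs, hgxs, hvs⟩ := hv
  have hlim : Tendsto (fun n => g (xs n) + ⟪vs n, y - xs n⟫_ℝ - ρ / 2 * ‖y - xs n‖ ^ 2) atTop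
      (𝓝 (g x + ⟪v, y - x⟫_ℝ - ρ / 2 * ‖y - x‖ ^ 2)) :=
    (hgxs.add (hvs.inner (tendsto_const_nhds.sub hxs))).sub
      (((tendsto_const_nhds.sub hxs).norm.pow 2).const_mul (ρ / 2))
  exact le_of_tendsto' hlim fun n =>
    (isFrechetSubgradient_of_mem_frechetSubdiff (hfs n)).add_inner_sub_sq_le hρ hwc y

theorem Metric.le_infDist_sq {α : Type*} [PseudoMetricSpace α] {s : Set α} {x : α} {c : ℝ}
    (hs : s.Nonempty) (h : ∀ y ∈ s, c ≤ dist x y ^ 2) : c ≤ infDist x s ^ 2 :=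
  (Real.sqrt_le_left infDist_nonneg).1 <|
    (le_infDist hs).2 fun y hy => (Real.sqrt_le_left dist_nonneg).2 (h y hy)

theorem no_stationary_points_near_solution_set_general
    {d : ℕ} (g : EuclideanSpace ℝ (Fin d) → ℝ) (ρ μ : ℝ) (hρ : 0 < ρ)
    (hwc : ConvexOn ℝ Set.univ (fun y => g y + ρ / 2 * ‖y‖ ^ 2))
    (Xs : Set (EuclideanSpace ℝ (Fin d)))
    (hsharp : ∀ xb ∈ Xs, ∀ y, g y - g xb ≥ μ * Metric.infDist y Xs)
    (x : EuclideanSpace ℝ (Fin d))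
    (hstat : (0 : EuclideanSpace ℝ (Fin d)) ∈ limitingSubdiff g x) :
    ¬ (0 < Metric.infDist x Xs ∧ Metric.infDist x Xs < 2 * μ / ρ) := by
  rintro ⟨hpos, hlt⟩
  have hne : Xs.Nonempty := nonempty_iff_ne_empty.2 fun h => by simp [h] at hpos
  have hquad : ∀ y ∈ Xs, 2 * μ / ρ * infDist x Xs ≤ dist x y ^ 2 := fun y hy => by
    have hmin := add_inner_sub_sq_le_of_mem_limitingSubdiff hρ.le hwc hstat y
    rw [inner_zero_left, ← dist_eq_norm, dist_comm] at hmin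
    have := hsharp y hy x
    rw [div_mul_eq_mul_div, div_le_iff₀ hρ]
    linarith
  have hsq : 2 * μ / ρ * infDist x Xs ≤ infDist x Xs ^ 2 := Metric.le_infDist_sq hne hquad
  nlinarith

/-- A ρ-weakly convex, sharp function has no stationary points `x` with
`0 < dist(x, Xs) < 2μ/ρ`. -/
theorem no_stationary_points_near_solution_set
    {d : ℕ} (g : EuclideanSpace ℝ (Fin d) → ℝ) (ρ μ : ℝ) (hρ : 0 < ρ) (hμ : 0 < μ)
    (hwc : ConvexOn ℝ Set.univ (fun y => g y + ρ / 2 * ‖y‖ ^ 2))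
    (Xs : Set (EuclideanSpace ℝ (Fin d))) (hXs : Xs = {y | ∀ z, g y ≤ g z})
    (hXsne : Xs.Nonempty)
    (hsharp : ∀ xb ∈ Xs, ∀ y, g y - g xb ≥ μ * Metric.infDist y Xs)
    (x : EuclideanSpace ℝ (Fin d))
    (hstat : (0 : EuclideanSpace ℝ (Fin d)) ∈ limitingSubdiff g x) :
    ¬ (0 < Metric.infDist x Xs ∧ Metric.infDist x Xs < 2 * μ / ρ) :=
  no_stationary_points_near_solution_set_general g ρ μ hρ hwc Xs hsharp x hstat
end

section
/- Let g: ℝ^d → ℝ be ρ-weakly convex and sharp with constants μ, ρ > 0 and minimizer set 𝒳. Fix γ ∈ (0,1), let 𝒯 = {x : dist(x, 𝒳) ≤ γμ/ρ}, and let L = sup{‖ζ‖ : x ∈ 𝒯, ζ ∈ ∂g(x)}. Suppose x ∈ 𝒯 is not a minimizer, ζ ∈ ∂g(x) with ζ ≠ 0, and define x⁺ = x - ((g(x) - min g)/‖ζ‖²)ζ. Then dist²(x⁺, 𝒳) ≤ (1 - (1-γ)μ²/L²)·dist²(x, 𝒳). -/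
open scoped InnerProductSpace

/-!
Fix a minimizer `y` and write `h = g x - min g`, `A = h / ‖ζ‖²`. Expanding the square,
`‖x⁺ - y‖² = ‖x - y‖² - 2A⟪ζ, x - y⟫ + A h`, and weak convexity bounds
`⟪ζ, x - y⟫ ≥ h - (ρ/2)‖x - y‖²`, so `‖x⁺ - y‖² ≤ ‖x - y‖² - A (h - ρ‖x - y‖²)`.
The right side is continuous in `‖x - y‖`, so it may be evaluated at a nearest point of the
closure of the solution set, i.e. at `‖x - y‖ = D = dist(x, 𝒳)`. There sharpness (`h ≥ μ D`)
and the tube condition (`ρ D ≤ γ μ`) give `h - ρ D² ≥ (1 - γ) μ D`, while `A ≥ μ D / L²`.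
-/

theorem Metric.le_comp_infDist_of_forall_mem {α : Type*} [PseudoMetricSpace α] [ProperSpace α]
    {s : Set α} {φ : ℝ → ℝ} {c : ℝ} (hφ : Continuous φ) (hne : s.Nonempty) (x : α)
    (h : ∀ y ∈ s, c ≤ φ (dist x y)) : c ≤ φ (infDist x s) := by
  obtain ⟨y, hy, hxy⟩ := exists_mem_closure_infDist_eq_dist hne x
  have hclosed : IsClosed {y | c ≤ φ (dist x y)} :=
    isClosed_le continuous_const (hφ.comp (continuous_const.dist continuous_id))
  rw [hxy]
  exact closure_minimal h hclosed hy

theorem norm_polyak_step_sub_sq_le {E : Type*} [NormedAddCommGroup E] [InnerProductSpace ℝ E]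
    {x y ζ : E} {h ρ : ℝ} (hh : 0 ≤ h) (hinner : h - ρ / 2 * ‖x - y‖ ^ 2 ≤ ⟪ζ, x - y⟫_ℝ) :
    ‖x - (h / ‖ζ‖ ^ 2) • ζ - y‖ ^ 2 ≤ ‖x - y‖ ^ 2 - h / ‖ζ‖ ^ 2 * (h - ρ * ‖x - y‖ ^ 2) := by
  set A := h / ‖ζ‖ ^ 2
  have hA : 0 ≤ A := by positivity
  have hAζ : A ^ 2 * ‖ζ‖ ^ 2 = A * h := by
    rcases eq_or_ne ζ 0 with rfl | hζ
    · simp [A]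
    · simp only [A]
      field_simp
  have hexpand : ‖x - A • ζ - y‖ ^ 2 = ‖x - y‖ ^ 2 - 2 * A * ⟪ζ, x - y⟫_ℝ + A * h := by
    rw [sub_right_comm, norm_sub_sq_real, real_inner_smul_right, real_inner_comm, norm_smul,
      mul_pow, Real.norm_eq_abs, sq_abs, hAζ]
    ring
  rw [hexpand]
  linarith [mul_le_mul_of_nonneg_left hinner hA]

theorem polyak_contraction_of_sharp {D h n ρ μ γ L : ℝ} (hD : 0 ≤ D) (hμ : 0 ≤ μ) (hγ : γ ≤ 1)
    (hn : 0 < n) (hnL : n ≤ L) (hsharp : μ * D ≤ h) (hρD : ρ * D ≤ γ * μ) :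
    D ^ 2 - h / n ^ 2 * (h - ρ * D ^ 2) ≤ (1 - (1 - γ) * μ ^ 2 / L ^ 2) * D ^ 2 := by
  have hL : 0 < L := hn.trans_le hnL
  have hgap : (1 - γ) * μ * D ≤ h - ρ * D ^ 2 := by
    linarith [mul_le_mul_of_nonneg_right hρD hD]
  have hstepsize : μ * D / L ^ 2 ≤ h / n ^ 2 :=
    div_le_div₀ (hsharp.trans' (mul_nonneg hμ hD)) hsharp (by positivity)
      (pow_le_pow_left₀ hn.le hnL 2)
  have hgap0 : 0 ≤ (1 - γ) * μ * D := mul_nonneg (mul_nonneg (by linarith) hμ) hD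
  calc D ^ 2 - h / n ^ 2 * (h - ρ * D ^ 2)
      ≤ D ^ 2 - μ * D / L ^ 2 * ((1 - γ) * μ * D) := by
        gcongr ?_ - ?_
        exact mul_le_mul hstepsize hgap hgap0
          ((div_nonneg (mul_nonneg hμ hD) (by positivity)).trans hstepsize)
    _ = (1 - (1 - γ) * μ ^ 2 / L ^ 2) * D ^ 2 := by ring

theorem polyak_step_linear_rate_general
    {d : ℕ} (g : EuclideanSpace ℝ (Fin d) → ℝ) (ρ μ γ L : ℝ)
    (hρ : 0 < ρ) (hμ : 0 < μ) (hγ1 : γ < 1)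
    (Xs : Set (EuclideanSpace ℝ (Fin d))) (hXs : Xs = {y | ∀ z, g y ≤ g z})
    (xb : EuclideanSpace ℝ (Fin d)) (hxb : xb ∈ Xs)
    (hwc : ∀ x y v, v ∈ limitingSubdiff g x →
      g y ≥ g x + ⟪v, y - x⟫_ℝ - ρ / 2 * ‖y - x‖ ^ 2)
    (hsharp : ∀ y, g y - g xb ≥ μ * Metric.infDist y Xs)
    (T : Set (EuclideanSpace ℝ (Fin d))) (hT : T = {y | Metric.infDist y Xs ≤ γ * μ / ρ})
    (hL : ∀ y ∈ T, ∀ ζ ∈ limitingSubdiff g y, ‖ζ‖ ≤ L)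
    (x : EuclideanSpace ℝ (Fin d)) (hxT : x ∈ T)
    (ζ : EuclideanSpace ℝ (Fin d)) (hζ : ζ ∈ limitingSubdiff g x) (hζ0 : ζ ≠ 0)
    (x' : EuclideanSpace ℝ (Fin d)) (hx' : x' = x - ((g x - g xb) / ‖ζ‖ ^ 2) • ζ) :
    Metric.infDist x' Xs ^ 2 ≤ (1 - (1 - γ) * μ ^ 2 / L ^ 2) * Metric.infDist x Xs ^ 2 := by
  subst hT hx'
  have hmin : ∀ y ∈ Xs, ∀ z, g y ≤ g z := by rw [hXs]; exact fun y hy => hy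
  set h := g x - g xb
  have hh : 0 ≤ h := sub_nonneg.mpr (hmin xb hxb x)
  have hρD : ρ * Metric.infDist x Xs ≤ γ * μ := (le_div_iff₀' hρ).mp hxT
  have hdecrease : ∀ y ∈ Xs, Metric.infDist (x - (h / ‖ζ‖ ^ 2) • ζ) Xs ^ 2 ≤
      dist x y ^ 2 - h / ‖ζ‖ ^ 2 * (h - ρ * dist x y ^ 2) := fun y hy => by
    have hgy : g y = g xb := le_antisymm (hmin y hy xb) (hmin xb hxb y)
    have hinner : h - ρ / 2 * ‖x - y‖ ^ 2 ≤ ⟪ζ, x - y⟫_ℝ := by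
      have := hwc x y ζ hζ
      rw [← neg_sub x y, inner_neg_right, norm_neg, hgy] at this
      linarith
    rw [dist_eq_norm]
    refine (pow_le_pow_left₀ Metric.infDist_nonneg ?_ 2).trans
      (norm_polyak_step_sub_sq_le hh hinner)
    rw [← dist_eq_norm]
    exact Metric.infDist_le_dist_of_mem hy
  refine (Metric.le_comp_infDist_of_forall_mem (φ := fun t => t ^ 2 - h / ‖ζ‖ ^ 2 * (h - ρ * t ^ 2))
    (by fun_prop) ⟨xb, hxb⟩ x hdecrease).trans ?_
  exact polyak_contraction_of_sharp Metric.infDist_nonneg hμ.le hγ1.le (norm_pos_iff.mpr hζ0)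
    (hL x hxT ζ hζ) (hsharp x) hρD

/-- One step of the Polyak subgradient method on a ρ-weakly convex, μ-sharp function
contracts the squared distance to the solution set at the rate `1 - (1-γ)μ²/L²`. -/
theorem polyak_step_linear_rate
    {d : ℕ} (g : EuclideanSpace ℝ (Fin d) → ℝ) (ρ μ γ L : ℝ)
    (hρ : 0 < ρ) (hμ : 0 < μ) (hγ0 : 0 < γ) (hγ1 : γ < 1)
    (Xs : Set (EuclideanSpace ℝ (Fin d))) (hXs : Xs = {y | ∀ z, g y ≤ g z})
    (xb : EuclideanSpace ℝ (Fin d)) (hxb : xb ∈ Xs)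
    (hwc : ∀ x y v, v ∈ limitingSubdiff g x →
      g y ≥ g x + ⟪v, y - x⟫_ℝ - ρ / 2 * ‖y - x‖ ^ 2)
    (hsharp : ∀ y, g y - g xb ≥ μ * Metric.infDist y Xs)
    (T : Set (EuclideanSpace ℝ (Fin d))) (hT : T = {y | Metric.infDist y Xs ≤ γ * μ / ρ})
    (hL : ∀ y ∈ T, ∀ ζ ∈ limitingSubdiff g y, ‖ζ‖ ≤ L)
    (x : EuclideanSpace ℝ (Fin d)) (hxT : x ∈ T) (hxnot : x ∉ Xs)
    (ζ : EuclideanSpace ℝ (Fin d)) (hζ : ζ ∈ limitingSubdiff g x) (hζ0 : ζ ≠ 0)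
    (x' : EuclideanSpace ℝ (Fin d)) (hx' : x' = x - ((g x - g xb) / ‖ζ‖ ^ 2) • ζ) :
    Metric.infDist x' Xs ^ 2 ≤ (1 - (1 - γ) * μ ^ 2 / L ^ 2) * Metric.infDist x Xs ^ 2 :=
  polyak_step_linear_rate_general g ρ μ γ L hρ hμ hγ1 Xs hXs xb hxb hwc hsharp T hT hL x hxT ζ hζ
    hζ0 x' hx'
end

section
/- Let a ∼ N(0, I_d) be a standard Gaussian vector in ℝ^d and x, x̄ ∈ ℝ^d. Set X = xx^T - x̄x̄^T. Then E_a[|⟨a,x⟩² - ⟨a,x̄⟩²|] = E_v[|⟨λ(X), v⟩|], where λ(X) ∈ ℝ^d is the vector of eigenvalues of X and v has i.i.d. χ²₁ (chi-squared with one degree of freedom) coordinates. -/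
/-!
The integrand is `|aᵀ X a|`. Diagonalising `X` in an orthonormal eigenbasis turns `aᵀ X a` into
`∑ λᵢ cᵢ²`, where `c` are the coordinates of `a` in that basis; since the change of coordinates is
an isometry, `c` is again a standard Gaussian vector by rotation invariance.
-/

open MeasureTheory ProbabilityTheory

open scoped InnerProductSpace Matrix

lemma OrthonormalBasis.inner_map_self_eq_sum_of_apply_eq_smul {ι E : Type*} [Fintype ι]
    [NormedAddCommGroup E] [InnerProductSpace ℝ E] (b : OrthonormalBasis ι ℝ E)
    (T : E →ₗ[ℝ] E) (μ : ι → ℝ) (hT : ∀ i, T (b i) = μ i • b i) (v : E) :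
    ⟪T v, v⟫_ℝ = ∑ i, μ i * b.repr v i ^ 2 := by
  conv_lhs => arg 2; rw [← b.sum_repr v]
  simp only [map_sum, map_smul, hT, sum_inner, real_inner_smul_left, b.repr_apply_apply]
  exact Finset.sum_congr rfl fun i _ => by ring

lemma Matrix.IsHermitian.dotProduct_mulVec_self_eq_sum_eigenvalues {n : Type*} [Fintype n]
    [DecidableEq n] {A : Matrix n n ℝ} (hA : A.IsHermitian) (a : n → ℝ) :
    a ⬝ᵥ A *ᵥ a = ∑ i, hA.eigenvalues i * hA.eigenvectorBasis.repr (WithLp.toLp 2 a) i ^ 2 :=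
  hA.eigenvectorBasis.inner_map_self_eq_sum_of_apply_eq_smul (Matrix.toEuclideanLin A)
    hA.eigenvalues (fun i => congrArg (WithLp.toLp 2) (hA.mulVec_eigenvectorBasis i)) _

lemma dotProduct_vecMulVec_self_mulVec {n : Type*} [Fintype n] (a y : n → ℝ) :
    a ⬝ᵥ Matrix.vecMulVec y y *ᵥ a = (a ⬝ᵥ y) ^ 2 := by
  simp [Matrix.vecMulVec_mulVec, dotProduct_comm y a, sq]

lemma integral_pi_gaussianReal_eq_integral_stdGaussian {ι : Type*} [Fintype ι]
    (g : (ι → ℝ) → ℝ) :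
    ∫ a, g a ∂(Measure.pi fun _ : ι => gaussianReal 0 1) =
      ∫ v, g (WithLp.ofLp v) ∂(stdGaussian (EuclideanSpace ℝ ι)) := by
  rw [← map_pi_eq_stdGaussian, ← MeasurableEquiv.coe_toLp, integral_map_equiv]
  rfl

lemma integral_stdGaussian_comp_linearIsometryEquiv {E F : Type*}
    [NormedAddCommGroup E] [InnerProductSpace ℝ E] [FiniteDimensional ℝ E]
    [MeasurableSpace E] [BorelSpace E]
    [NormedAddCommGroup F] [InnerProductSpace ℝ F] [FiniteDimensional ℝ F]
    [MeasurableSpace F] [BorelSpace F] (f : E ≃ₗᵢ[ℝ] F) (g : F → ℝ) :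
    ∫ v, g (f v) ∂(stdGaussian E) = ∫ w, g w ∂(stdGaussian F) := by
  rw [← stdGaussian_map f, ← f.coe_toMeasurableEquiv, integral_map_equiv]

lemma integral_pi_gaussianReal_comp_linearIsometryEquiv {ι : Type*} [Fintype ι]
    (f : EuclideanSpace ℝ ι ≃ₗᵢ[ℝ] EuclideanSpace ℝ ι) (g : (ι → ℝ) → ℝ) :
    ∫ a, g (WithLp.ofLp (f (WithLp.toLp 2 a))) ∂(Measure.pi fun _ : ι => gaussianReal 0 1) =
      ∫ a, g a ∂(Measure.pi fun _ : ι => gaussianReal 0 1) := by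
  rw [integral_pi_gaussianReal_eq_integral_stdGaussian,
    integral_pi_gaussianReal_eq_integral_stdGaussian]
  exact integral_stdGaussian_comp_linearIsometryEquiv f fun w => g (WithLp.ofLp w)

/-- Spectral representation of the population objective: for a standard Gaussian `a`,
`E[|⟨a,x⟩² - ⟨a,xb⟩²|] = E[|⟨λ(X), v⟩|]` where `X = x xᵀ - xb xbᵀ` and `v` has i.i.d.
χ²₁ coordinates (squares of i.i.d. standard normal coordinates). -/
theorem spectral_representation_population_objective {d : ℕ} (x xb : Fin d → ℝ)
    (X : Matrix (Fin d) (Fin d) ℝ)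
    (hXdef : X = Matrix.vecMulVec x x - Matrix.vecMulVec xb xb)
    (hX : X.IsHermitian) :
    ∫ a : Fin d → ℝ, |(∑ i, a i * x i) ^ 2 - (∑ i, a i * xb i) ^ 2|
        ∂(Measure.pi fun _ => gaussianReal 0 1) =
      ∫ u : Fin d → ℝ, |∑ i, hX.eigenvalues i * (u i) ^ 2|
        ∂(Measure.pi fun _ => gaussianReal 0 1) := by
  have hquad (a : Fin d → ℝ) :
      (∑ i, a i * x i) ^ 2 - (∑ i, a i * xb i) ^ 2 = a ⬝ᵥ X *ᵥ a := by
    rw [hXdef, Matrix.sub_mulVec, dotProduct_sub, dotProduct_vecMulVec_self_mulVec,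
      dotProduct_vecMulVec_self_mulVec]
    rfl
  simp_rw [hquad, hX.dotProduct_mulVec_self_eq_sum_eigenvalues]
  exact integral_pi_gaussianReal_comp_linearIsometryEquiv hX.eigenvectorBasis.repr
    fun u => |∑ i, hX.eigenvalues i * u i ^ 2|
end

section
/- Let v₁, v₂ be i.i.d. chi-squared random variables with one degree of freedom. Then for all y₁ ≥ 0 and y₂ ≤ 0, E[|v₁y₁ + v₂y₂|] = (4/π)[(y₁+y₂)·arctan(√(-y₁/y₂)) + √(-y₁y₂)] - (y₁+y₂). -/
/-
In polar coordinates `(u₁, u₂) = (r cos θ, r sin θ)` the integrand is `r² |q θ|` with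
`q θ = y₁ cos² θ + y₂ sin² θ`, and the density of the standard Gaussian on the plane is
`(2π)⁻¹ e^{-r²/2}`. The radial integral `∫₀^∞ r³ e^{-r²/2} dr = 2` and the symmetries of `q`
leave `(4/π) ∫₀^{π/2} |q|`. On `[0, π/2]`, `q θ = y₁ - (y₁ - y₂) sin² θ` decreases and vanishes at
`θ₀ = arctan √(-y₁/y₂)`, so the absolute value is removed by splitting at `θ₀`, and
`sin θ₀ cos θ₀ = t / (1 + t²)` with `t = √(-y₁/y₂)` produces the term `√(-y₁ y₂)`.
-/

open MeasureTheory ProbabilityTheory Real Set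
open scoped NNReal

theorem integral_gaussianReal_prod_eq_integral_smul {E : Type*} [NormedAddCommGroup E]
    [NormedSpace ℝ E] (μ₁ μ₂ : ℝ) {v₁ v₂ : ℝ≥0} (hv₁ : v₁ ≠ 0) (hv₂ : v₂ ≠ 0) (f : ℝ × ℝ → E) :
    ∫ p, f p ∂((gaussianReal μ₁ v₁).prod (gaussianReal μ₂ v₂)) =
      ∫ p, (gaussianPDFReal μ₁ v₁ p.1 * gaussianPDFReal μ₂ v₂ p.2) • f p := by
  rw [gaussianReal_of_var_ne_zero _ hv₁, gaussianReal_of_var_ne_zero _ hv₂,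
    prod_withDensity (measurable_gaussianPDF _ _) (measurable_gaussianPDF _ _),
    ← Measure.volume_eq_prod, integral_withDensity_eq_integral_toReal_smul (by fun_prop)
      (ae_of_all _ fun _ => ENNReal.mul_lt_top (by simp [gaussianPDF]) (by simp [gaussianPDF]))]
  simp only [ENNReal.toReal_mul, toReal_gaussianPDF]

theorem gaussianPDFReal_zero_one_mul (x y : ℝ) :
    gaussianPDFReal 0 1 x * gaussianPDFReal 0 1 y = (2 * π)⁻¹ * exp (-(x ^ 2 + y ^ 2) / 2) := by
  have h : (√(2 * π))⁻¹ * (√(2 * π))⁻¹ = (2 * π)⁻¹ := by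
    rw [← mul_inv, mul_self_sqrt (by positivity)]
  simp only [gaussianPDFReal, NNReal.coe_one, mul_one, sub_zero]
  rw [mul_mul_mul_comm, h, ← exp_add]
  ring_nf

theorem integral_gaussianReal_zero_one_prod_eq_polar (f : ℝ × ℝ → ℝ) :
    ∫ p, f p ∂((gaussianReal 0 1).prod (gaussianReal 0 1)) =
      (2 * π)⁻¹ * ∫ p in polarCoord.target, p.1 * exp (-p.1 ^ 2 / 2) * f (polarCoord.symm p) := by
  rw [integral_gaussianReal_prod_eq_integral_smul 0 0 one_ne_zero one_ne_zero,
    ← integral_comp_polarCoord_symm, ← integral_const_mul]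
  refine setIntegral_congr_fun polarCoord.open_target.measurableSet fun p _ => ?_
  have hr : (p.1 * cos p.2) ^ 2 + (p.1 * sin p.2) ^ 2 = p.1 ^ 2 := by
    linear_combination p.1 ^ 2 * cos_sq_add_sin_sq p.2
  simp only [polarCoord_symm_apply, smul_eq_mul, gaussianPDFReal_zero_one_mul, hr]
  ring

theorem integral_pow_three_mul_exp_neg_sq_div_two :
    ∫ r in Ioi (0 : ℝ), r ^ 3 * exp (-r ^ 2 / 2) = 2 := by
  have h := integral_rpow_mul_exp_neg_mul_rpow (p := 2) (q := 3) (b := 1 / 2)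
    (by norm_num) (by norm_num) (by norm_num)
  norm_num [Gamma_two] at h
  convert h using 5
  ring

theorem integral_neg_pi_pi_eq_four_mul_of_symm {h : ℝ → ℝ} (hc : Continuous h)
    (h_even : ∀ θ, h (-θ) = h θ) (h_pi_sub : ∀ θ, h (π - θ) = h θ) :
    ∫ θ in -π..π, h θ = 4 * ∫ θ in 0..π / 2, h θ := by
  have hi : ∀ a b : ℝ, IntervalIntegrable h volume a b := hc.intervalIntegrable
  have h_left : ∫ θ in -π..0, h θ = ∫ θ in 0..π, h θ := by
    simpa [h_even] using (intervalIntegral.integral_comp_neg (a := 0) (b := π) h).symm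
  have h_right : ∫ θ in π / 2..π, h θ = ∫ θ in 0..π / 2, h θ := by
    have := intervalIntegral.integral_comp_sub_left (a := 0) (b := π / 2) h π
    simp only [h_pi_sub, sub_zero, sub_half] at this
    exact this.symm
  rw [← intervalIntegral.integral_add_adjacent_intervals (hi _ 0) (hi 0 _), h_left,
    ← intervalIntegral.integral_add_adjacent_intervals (hi _ (π / 2)) (hi (π / 2) _), h_right]
  ring

theorem intervalIntegral.integral_abs_eq_sub_of_sign_change {f : ℝ → ℝ} {a b c : ℝ}
    (hac : a ≤ c) (hcb : c ≤ b) (hf : IntervalIntegrable f volume a b)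
    (h_nonneg : ∀ x ∈ Icc a c, 0 ≤ f x) (h_nonpos : ∀ x ∈ Icc c b, f x ≤ 0) :
    ∫ x in a..b, |f x| = (∫ x in a..c, f x) - ∫ x in c..b, f x := by
  have hc : c ∈ uIcc a b := by rw [uIcc_of_le (hac.trans hcb)]; exact ⟨hac, hcb⟩
  rw [← intervalIntegral.integral_add_adjacent_intervals
      (hf.abs.mono_set (uIcc_subset_uIcc_left hc)) (hf.abs.mono_set (uIcc_subset_uIcc_right hc)),
    sub_eq_add_neg, ← intervalIntegral.integral_neg]
  congr 1 <;> refine intervalIntegral.integral_congr fun x hx => ?_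
  · exact abs_of_nonneg (h_nonneg x (uIcc_of_le hac ▸ hx))
  · exact abs_of_nonpos (h_nonpos x (uIcc_of_le hcb ▸ hx))

theorem integral_mul_cos_sq_add_mul_sin_sq (y₁ y₂ a b : ℝ) :
    ∫ θ in a..b, (y₁ * cos θ ^ 2 + y₂ * sin θ ^ 2) =
      y₁ * ((cos b * sin b - cos a * sin a + b - a) / 2) +
        y₂ * ((sin a * cos a - sin b * cos b + b - a) / 2) := by
  rw [intervalIntegral.integral_add, intervalIntegral.integral_const_mul,
    intervalIntegral.integral_const_mul, integral_cos_sq, integral_sin_sq]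
  all_goals exact (by fun_prop : Continuous _).intervalIntegrable _ _

theorem monotoneOn_sin_sq : MonotoneOn (fun θ => sin θ ^ 2) (Icc 0 (π / 2)) := by
  intro x hx y hy hxy
  have hx_nonneg : 0 ≤ sin x := sin_nonneg_of_nonneg_of_le_pi hx.1 (by linarith [hx.2, pi_pos])
  have hxy_sin : sin x ≤ sin y :=
    sin_le_sin_of_le_of_le_pi_div_two (by linarith [hx.1, pi_pos]) hy.2 hxy
  exact pow_le_pow_left₀ hx_nonneg hxy_sin 2

theorem antitoneOn_mul_cos_sq_add_mul_sin_sq {y₁ y₂ : ℝ} (h : y₂ ≤ y₁) :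
    AntitoneOn (fun θ => y₁ * cos θ ^ 2 + y₂ * sin θ ^ 2) (Icc 0 (π / 2)) := by
  have hq : ∀ θ, y₁ * cos θ ^ 2 + y₂ * sin θ ^ 2 = y₁ - (y₁ - y₂) * sin θ ^ 2 := fun θ => by
    linear_combination y₁ * cos_sq_add_sin_sq θ
  intro x hx y hy hxy
  simp only [hq]
  linarith [mul_le_mul_of_nonneg_left (monotoneOn_sin_sq hx hy hxy) (sub_nonneg.2 h)]

theorem mul_cos_sq_add_mul_sin_sq_arctan (y₁ y₂ t : ℝ) :
    y₁ * cos (arctan t) ^ 2 + y₂ * sin (arctan t) ^ 2 = (y₁ + y₂ * t ^ 2) / (1 + t ^ 2) := by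
  rw [cos_sq_arctan, sin_sq_arctan]
  ring

theorem sin_arctan_mul_cos_arctan (t : ℝ) : sin (arctan t) * cos (arctan t) = t / (1 + t ^ 2) := by
  rw [sin_arctan, cos_arctan, div_mul_div_comm, mul_one, mul_self_sqrt (by positivity)]

theorem integral_abs_mul_cos_sq_add_mul_sin_sq_of_nonneg {y₁ y₂ : ℝ} (hy₁ : 0 ≤ y₁)
    (hy₂ : 0 ≤ y₂) :
    ∫ θ in 0..π / 2, |y₁ * cos θ ^ 2 + y₂ * sin θ ^ 2| = (y₁ + y₂) * (π / 4) := by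
  rw [intervalIntegral.integral_congr fun θ _ => abs_of_nonneg (by positivity),
    integral_mul_cos_sq_add_mul_sin_sq]
  simp only [sin_zero, cos_zero, sin_pi_div_two, cos_pi_div_two]
  ring

theorem integral_abs_mul_cos_sq_add_mul_sin_sq_of_neg {y₁ y₂ : ℝ} (hy₁ : 0 ≤ y₁) (hy₂ : y₂ < 0) :
    ∫ θ in 0..π / 2, |y₁ * cos θ ^ 2 + y₂ * sin θ ^ 2| =
      (y₁ + y₂) * arctan √(-y₁ / y₂) + √(-(y₁ * y₂)) - (y₁ + y₂) * (π / 4) := by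
  set t := √(-y₁ / y₂)
  have ht_nonneg : 0 ≤ t := sqrt_nonneg _
  have hy₂t : y₂ * t ^ 2 = -y₁ := by
    rw [sq_sqrt (div_nonneg_of_nonpos (by linarith) hy₂.le), mul_div_cancel₀ _ hy₂.ne]
  have hθ₀ : arctan t ∈ Icc 0 (π / 2) :=
    ⟨arctan_nonneg.2 ht_nonneg, (arctan_lt_pi_div_two t).le⟩
  have hq₀ : y₁ * cos (arctan t) ^ 2 + y₂ * sin (arctan t) ^ 2 = 0 := by
    rw [mul_cos_sq_add_mul_sin_sq_arctan, hy₂t, add_neg_cancel, zero_div]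
  have h_anti := antitoneOn_mul_cos_sq_add_mul_sin_sq (hy₂.le.trans hy₁)
  have hsqrt : √(-(y₁ * y₂)) = -y₂ * t := by
    rw [show -(y₁ * y₂) = (-y₂ * t) ^ 2 by linear_combination (-y₂) * hy₂t,
      sqrt_sq (mul_nonneg (neg_nonneg.2 hy₂.le) ht_nonneg)]
  rw [intervalIntegral.integral_abs_eq_sub_of_sign_change hθ₀.1 hθ₀.2
      ((by fun_prop : Continuous _).intervalIntegrable _ _)
      (fun θ hθ => hq₀ ▸ h_anti ⟨hθ.1, hθ.2.trans hθ₀.2⟩ hθ₀ hθ.2)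
      (fun θ hθ => hq₀ ▸ h_anti hθ₀ ⟨hθ₀.1.trans hθ.1, hθ.2⟩ hθ.1),
    integral_mul_cos_sq_add_mul_sin_sq, integral_mul_cos_sq_add_mul_sin_sq, mul_comm (cos _),
    sin_arctan_mul_cos_arctan, hsqrt]
  simp only [sin_zero, cos_zero, sin_pi_div_two, cos_pi_div_two]
  have hkey : (y₁ - y₂) * (t / (1 + t ^ 2)) = -y₂ * t := by
    rw [← neg_neg y₁, ← hy₂t]
    field_simp
    ring
  linear_combination hkey

theorem integral_abs_sq_mul_add_sq_mul_gaussianReal_prod (y₁ y₂ : ℝ) :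
    ∫ u : ℝ × ℝ, |u.1 ^ 2 * y₁ + u.2 ^ 2 * y₂| ∂((gaussianReal 0 1).prod (gaussianReal 0 1)) =
      4 / π * ∫ θ in 0..π / 2, |y₁ * cos θ ^ 2 + y₂ * sin θ ^ 2| := by
  set q : ℝ → ℝ := fun θ => |y₁ * cos θ ^ 2 + y₂ * sin θ ^ 2|
  have h_polar : ∀ p : ℝ × ℝ, p.1 * exp (-p.1 ^ 2 / 2) *
      |(polarCoord.symm p).1 ^ 2 * y₁ + (polarCoord.symm p).2 ^ 2 * y₂| =
        p.1 ^ 3 * exp (-p.1 ^ 2 / 2) * q p.2 := fun p => by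
    rw [polarCoord_symm_apply, show (p.1 * cos p.2) ^ 2 * y₁ + (p.1 * sin p.2) ^ 2 * y₂ =
      p.1 ^ 2 * (y₁ * cos p.2 ^ 2 + y₂ * sin p.2 ^ 2) by ring, abs_mul, abs_sq]
    ring
  have h_angular : ∫ θ in Ioo (-π) π, q θ = 4 * ∫ θ in 0..π / 2, q θ := by
    rw [← integral_Ioc_eq_integral_Ioo, ← intervalIntegral.integral_of_le (by linarith [pi_pos])]
    exact integral_neg_pi_pi_eq_four_mul_of_symm (by fun_prop) (by simp [q])
      (by simp [q, cos_pi_sub, sin_pi_sub])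
  rw [integral_gaussianReal_zero_one_prod_eq_polar, funext h_polar, polarCoord_target,
    Measure.volume_eq_prod, ← Measure.prod_restrict,
    integral_prod_mul (fun r => r ^ 3 * exp (-r ^ 2 / 2)) q,
    integral_pow_three_mul_exp_neg_sq_div_two, h_angular]
  field_simp

/-- Explicit formula for `E[|v₁ y₁ + v₂ y₂|]` where `v₁, v₂` are i.i.d. χ²₁
(squares of independent standard normals), for `y₁ ≥ 0 ≥ y₂` (the case `y₂ = 0`
being interpreted by continuity as `y₁`). -/
theorem chi_squared_abs_expectation (y₁ y₂ : ℝ) (hy₁ : 0 ≤ y₁) (hy₂ : y₂ ≤ 0) :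
    ∫ u : ℝ × ℝ, |u.1 ^ 2 * y₁ + u.2 ^ 2 * y₂|
        ∂((gaussianReal 0 1).prod (gaussianReal 0 1)) =
      if y₂ = 0 then y₁
      else 4 / Real.pi * ((y₁ + y₂) * Real.arctan (Real.sqrt (-y₁ / y₂)) +
        Real.sqrt (-(y₁ * y₂))) - (y₁ + y₂) := by
  rw [integral_abs_sq_mul_add_sq_mul_gaussianReal_prod]
  split_ifs with h
  · subst h
    rw [integral_abs_mul_cos_sq_add_mul_sin_sq_of_nonneg hy₁ le_rfl]
    field_simp
    ring
  · rw [integral_abs_mul_cos_sq_add_mul_sin_sq_of_neg hy₁ (hy₂.lt_of_ne h)]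
    field_simp
end

section
/- Let ζ(y₁, y₂) = (4/π)[(y₁+y₂)·arctan(√(-y₁/y₂)) + √(-y₁y₂)] - (y₁+y₂) for y₁ > 0 > y₂. Then the solutions of ∂ζ/∂y₁(y₁, y₂) = 0 on ℝ₊₊ × ℝ₋₋ are exactly the pairs (c²y, -y) with y > 0, where c > 0 is the unique solution of π/4 = c/(1+c²) + arctan(c). -/
/-!
The partial derivative `∂ζ/∂y₁` is homogeneous of degree zero: with `a = √(-y₁/y₂)` it equals
`4/π · (arctan a + a/(1+a²)) - 1`. The function `x ↦ arctan x + x/(1+x²)` has derivative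
`2/(1+x²)² > 0`, so the derivative vanishes exactly when `a = c`, i.e. when `y₁ = c² (-y₂)`.
-/

/-- The outer function `ζ(y₁, y₂)` of the population objective. -/
noncomputable def zetaFn (y₁ y₂ : ℝ) : ℝ :=
  4 / Real.pi * ((y₁ + y₂) * Real.arctan (Real.sqrt (-y₁ / y₂)) + Real.sqrt (-(y₁ * y₂)))
    - (y₁ + y₂)

open Real

theorem hasDerivAt_arctan_add_div_one_add_sq (x : ℝ) :
    HasDerivAt (fun x : ℝ => arctan x + x / (1 + x ^ 2)) (2 / (1 + x ^ 2) ^ 2) x := by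
  have hne : 1 + x ^ 2 ≠ 0 := by positivity
  have hd : HasDerivAt (fun x : ℝ => arctan x + x / (1 + x ^ 2)) _ x :=
    (hasDerivAt_arctan x).add ((hasDerivAt_id' x).div (((hasDerivAt_id' x).pow 2).const_add 1) hne)
  convert hd using 1
  field_simp
  ring

theorem hasDerivAt_zetaFn_fst {y₁ y₂ : ℝ} (h₁ : 0 < y₁) (h₂ : y₂ < 0) :
    HasDerivAt (fun t => zetaFn t y₂)
      (4 / π * (arctan √(-y₁ / y₂) + √(-y₁ / y₂) / (1 + √(-y₁ / y₂) ^ 2)) - 1) y₁ := by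
  have hquot : 0 < -y₁ / y₂ := div_pos_of_neg_of_neg (neg_neg_of_pos h₁) h₂
  have hprod : 0 < -(y₁ * y₂) := neg_pos.2 (mul_neg_of_pos_of_neg h₁ h₂)
  have hraw : HasDerivAt (fun t => zetaFn t y₂) _ y₁ :=
    (((((hasDerivAt_id' y₁).add_const y₂).mul
      (((hasDerivAt_id' y₁).neg.div_const y₂).sqrt hquot.ne').arctan).add
      (((hasDerivAt_id' y₁).mul_const y₂).neg.sqrt hprod.ne')).const_mul (4 / π)).sub
      ((hasDerivAt_id' y₁).add_const y₂)
  convert hraw using 1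
  simp only [Pi.neg_apply]
  set a := √(-y₁ / y₂) with ha
  have hapos : 0 < a := sqrt_pos.2 hquot
  have hy₂ : y₂ ≠ 0 := h₂.ne
  have hy₁ : y₁ = a ^ 2 * -y₂ := by
    rw [ha, sq_sqrt hquot.le]; field_simp
  have hb : √(-(y₁ * y₂)) = a * -y₂ := by
    rw [show -(y₁ * y₂) = (a * -y₂) ^ 2 by rw [hy₁]; ring]
    exact sqrt_sq (mul_nonneg hapos.le (neg_nonneg.2 h₂.le))
  rw [hb, hy₁]
  field_simp
  ring

theorem strictMono_arctan_add_div_one_add_sq :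
    StrictMono fun x : ℝ => arctan x + x / (1 + x ^ 2) :=
  strictMono_of_deriv_pos fun x => by
    rw [(hasDerivAt_arctan_add_div_one_add_sq x).deriv]; positivity

/-- On `ℝ₊₊ × ℝ₋₋`, the solutions of `∂ζ/∂y₁(y₁, y₂) = 0` are exactly the pairs
`(c² y, -y)` with `y > 0`, where `c > 0` is the unique solution of
`π/4 = c/(1+c²) + arctan c`. -/
theorem partial_zeta_vanishes_iff (c : ℝ) (hc : 0 < c)
    (hceq : Real.pi / 4 = c / (1 + c ^ 2) + Real.arctan c) :
    ∀ y₁ y₂ : ℝ, 0 < y₁ → y₂ < 0 →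
      (deriv (fun t => zetaFn t y₂) y₁ = 0 ↔ y₁ = c ^ 2 * (-y₂)) := by
  intro y₁ y₂ h₁ h₂
  have hquot : 0 ≤ -y₁ / y₂ := div_nonneg_of_nonpos (neg_nonpos.2 h₁.le) h₂.le
  rw [(hasDerivAt_zetaFn_fst h₁ h₂).deriv]
  set a := √(-y₁ / y₂)
  calc 4 / π * (arctan a + a / (1 + a ^ 2)) - 1 = 0 ↔ arctan a + a / (1 + a ^ 2) = π / 4 := by
        rw [sub_eq_zero, div_mul_eq_mul_div, div_eq_one_iff_eq pi_ne_zero, eq_div_iff four_ne_zero,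
          mul_comm]
    _ ↔ a = c := by
        rw [hceq, add_comm (c / _), strictMono_arctan_add_div_one_add_sq.injective.eq_iff]
    _ ↔ -y₁ / y₂ = c ^ 2 := sqrt_eq_iff_eq_sq hquot hc.le
    _ ↔ y₁ = c ^ 2 * -y₂ := by
        rw [div_eq_iff h₂.ne, mul_neg, neg_eq_iff_eq_neg]
end

section
/- Let x, x̄ ∈ ℝ^d with x ∉ {x̄, -x̄}, set X = xx^T - x̄x̄^T, and let U₁, U_d be orthonormal eigenvectors of X for the largest eigenvalue λ₁(X) and smallest eigenvalue λ_d(X). Then span{x, x̄} ⊆ span{U₁, U_d} and ⟨x, x̄⟩ = ⟨U₁,x⟩⟨U₁,x̄⟩ + ⟨U_d,x⟩⟨U_d,x̄⟩. -/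
open scoped InnerProductSpace
open InnerProductSpace Module.End

/-!
`X = x xᵀ - x̄ x̄ᵀ` is symmetric with range in `V = span {x, x̄}`, so every eigenvector with a
nonzero eigenvalue lies in `V`. If `x, x̄` are independent, `⟪X w, w⟫ = ⟪x, w⟫² - ⟪x̄, w⟫²`
takes both signs, so by the Rayleigh principle `λ₁ > 0 > λ_d` and `U₁, U_d` span `V`.
Otherwise `V` is a line on which `X` acts by a scalar, nonzero because `x ≠ ±x̄`, and the
extreme eigenvector of the same sign spans it. The correlation identity is Parseval's identity
in `span {U₁, U_d}`.
-/

theorem Submodule.span_pair_eq_of_linearIndependent {K V : Type*} [DivisionRing K]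
    [AddCommGroup V] [Module K V] {x y u v : V} (huv : LinearIndependent K ![u, v])
    (hu : u ∈ span K {x, y}) (hv : v ∈ span K {x, y}) : span K {u, v} = span K {x, y} := by
  have : FiniteDimensional K (span K {x, y}) := .span_of_finite K (Set.toFinite _)
  refine eq_of_le_of_finrank_le (span_le.2 (Set.insert_subset hu (by simpa))) ?_
  have hrange (a b : V) : Set.range ![a, b] = {a, b} := Matrix.range_cons_cons_empty a b ![]
  calc Module.finrank K (span K {x, y}) ≤ 2 := by
        rw [← hrange]; exact finrank_range_le_card ![x, y]
    _ = Module.finrank K (span K {u, v}) := by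
        rw [← hrange, finrank_span_eq_card huv, Fintype.card_fin]

section

variable {E : Type*} [NormedAddCommGroup E] [InnerProductSpace ℝ E]

theorem Orthonormal.inner_eq_of_mem_span_pair {u v x : E} (huv : Orthonormal ℝ ![u, v])
    (hx : x ∈ Submodule.span ℝ {u, v}) (y : E) :
    ⟪x, y⟫_ℝ = ⟪u, x⟫_ℝ * ⟪u, y⟫_ℝ + ⟪v, x⟫_ℝ * ⟪v, y⟫_ℝ := by
  obtain ⟨a, b, rfl⟩ := Submodule.mem_span_pair.1 hx
  obtain ⟨hu, huv, hv, -⟩ := orthonormal_vecCons_iff.1 huv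
  simp only [Matrix.cons_val_zero, Fin.forall_fin_one] at huv hv
  simp only [inner_add_left, inner_add_right, real_inner_smul_left, real_inner_smul_right,
    real_inner_self_eq_norm_sq, hu, hv, huv, real_inner_comm u v]
  ring

theorem LinearMap.IsSymmetric.exists_pos_hasEigenvalue_of_inner_pos [FiniteDimensional ℝ E]
    {T : E →L[ℝ] E} (hT : (T : E →ₗ[ℝ] E).IsSymmetric) {w : E} (hw : 0 < ⟪T w, w⟫_ℝ) :
    ∃ μ, 0 < μ ∧ HasEigenvalue (T : E →ₗ[ℝ] E) μ := by
  have hw0 : w ≠ 0 := by rintro rfl; simp at hw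
  have : Nontrivial E := ⟨⟨w, 0, hw0⟩⟩
  refine ⟨_, ?_, hT.hasEigenvalue_iSup_of_finiteDimensional⟩
  have hbdd : BddAbove (Set.range fun v : { v : E // v ≠ 0 } ↦ ⟪T v, v⟫_ℝ / ‖(v : E)‖ ^ 2) := by
    obtain ⟨C, hC⟩ := T.bddAbove_rayleighQuotient
    exact ⟨C, by rintro _ ⟨v, rfl⟩; exact (le_abs_self _).trans (hC ⟨v, rfl⟩)⟩
  calc (0 : ℝ) < ⟪T w, w⟫_ℝ / ‖w‖ ^ 2 := by positivity
    _ ≤ _ := le_ciSup hbdd (⟨w, hw0⟩ : { v : E // v ≠ 0 })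

theorem isSymmetric_rankOne_sub_rankOne (x y : E) :
    ((rankOne ℝ x x - rankOne ℝ y y : E →L[ℝ] E) : E →ₗ[ℝ] E).IsSymmetric :=
  (isSymmetric_rankOne_self x).sub (isSymmetric_rankOne_self y)

theorem inner_rankOne_sub_rankOne_apply_self (x y w : E) :
    ⟪(rankOne ℝ x x - rankOne ℝ y y) w, w⟫_ℝ = ⟪x, w⟫_ℝ ^ 2 - ⟪y, w⟫_ℝ ^ 2 := by
  rw [sub_apply, rankOne_apply, rankOne_apply, inner_sub_left, real_inner_smul_left,
    real_inner_smul_left]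
  ring

theorem exists_pos_hasEigenvalue_rankOne_sub_rankOne [FiniteDimensional ℝ E] {x y w : E}
    (hw : ⟪y, w⟫_ℝ ^ 2 < ⟪x, w⟫_ℝ ^ 2) :
    ∃ μ, 0 < μ ∧ HasEigenvalue ((rankOne ℝ x x - rankOne ℝ y y : E →L[ℝ] E) : E →ₗ[ℝ] E) μ :=
  (isSymmetric_rankOne_sub_rankOne x y).exists_pos_hasEigenvalue_of_inner_pos
    (by rw [inner_rankOne_sub_rankOne_apply_self]; linarith)

theorem mem_span_pair_of_rankOne_sub_rankOne_apply_eq_smul {x y v : E} {μ : ℝ}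
    (hv : (rankOne ℝ x x - rankOne ℝ y y) v = μ • v) (hμ : μ ≠ 0) :
    v ∈ Submodule.span ℝ {x, y} := by
  have hTv : (rankOne ℝ x x - rankOne ℝ y y) v ∈ Submodule.span ℝ {x, y} := by
    rw [sub_apply, rankOne_apply, rankOne_apply]
    exact Submodule.sub_mem _ (Submodule.smul_mem _ _ (Submodule.subset_span (by simp)))
      (Submodule.smul_mem _ _ (Submodule.subset_span (by simp)))
  rwa [hv, Submodule.smul_mem_iff _ hμ] at hTv

theorem mem_span_singleton_of_forall_sq_inner_le {x y : E} (h : ∀ w, ⟪x, w⟫_ℝ ^ 2 ≤ ⟪y, w⟫_ℝ ^ 2) :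
    x ∈ ℝ ∙ y := by
  rw [← Submodule.orthogonal_orthogonal (ℝ ∙ y), Submodule.mem_orthogonal]
  intro w hw
  rw [Submodule.mem_orthogonal_singleton_iff_inner_right] at hw
  rw [real_inner_comm, ← sq_nonpos_iff]
  simpa [hw] using h w

theorem exists_neg_hasEigenvalue_rankOne_sub_rankOne [FiniteDimensional ℝ E] {x y w : E}
    (hw : ⟪x, w⟫_ℝ ^ 2 < ⟪y, w⟫_ℝ ^ 2) :
    ∃ μ, μ < 0 ∧ HasEigenvalue ((rankOne ℝ x x - rankOne ℝ y y : E →L[ℝ] E) : E →ₗ[ℝ] E) μ := by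
  obtain ⟨μ, hμ, hev⟩ := exists_pos_hasEigenvalue_rankOne_sub_rankOne hw
  refine ⟨-μ, neg_neg_of_pos hμ, ?_⟩
  rwa [← neg_sub, ContinuousLinearMap.toLinearMap_neg, hasEigenvalue_neg_iff] at hev

theorem rankOne_smul_sub_rankOne_apply_self (c : ℝ) (y : E) :
    (rankOne ℝ (c • y) (c • y) - rankOne ℝ y y) y = ((c ^ 2 - 1) * ‖y‖ ^ 2) • y := by
  rw [sub_apply, rankOne_apply, rankOne_apply, real_inner_smul_left, real_inner_self_eq_norm_sq]
  module

theorem exists_eigenvector_of_mem_span_singleton {x y : E} (hxy : x ≠ y) (hxy' : x ≠ -y)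
    (hx : x ∈ ℝ ∙ y) : y ≠ 0 ∧ ∃ μ : ℝ, μ ≠ 0 ∧ (rankOne ℝ x x - rankOne ℝ y y) y = μ • y := by
  obtain ⟨c, rfl⟩ := Submodule.mem_span_singleton.1 hx
  have hy : y ≠ 0 := by rintro rfl; simp at hxy
  have hc : c ^ 2 - 1 ≠ 0 := by
    intro hc
    rcases sq_eq_one_iff.1 (sub_eq_zero.1 hc) with rfl | rfl
    · simp at hxy
    · simp at hxy'
  exact ⟨hy, (c ^ 2 - 1) * ‖y‖ ^ 2, mul_ne_zero hc (pow_ne_zero 2 (norm_ne_zero_iff.2 hy)),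
    rankOne_smul_sub_rankOne_apply_self c y⟩

theorem le_span_singleton_of_rankOne_sub_rankOne_apply_eq_smul {x y u U : E} {l : ℝ}
    (hU : (rankOne ℝ x x - rankOne ℝ y y) U = l • U) (hl : l ≠ 0) (hU0 : U ≠ 0)
    (hu : Submodule.span ℝ {x, y} ≤ ℝ ∙ u) : Submodule.span ℝ {x, y} ≤ ℝ ∙ U := by
  obtain ⟨t, rfl⟩ := Submodule.mem_span_singleton.1
    (hu (mem_span_pair_of_rankOne_sub_rankOne_apply_eq_smul hU hl))
  have ht : t ≠ 0 := by rintro rfl; simp at hU0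
  rwa [Submodule.span_singleton_smul_eq (IsUnit.mk0 t ht)]

theorem span_pair_le_span_of_extreme_eigenvectors [FiniteDimensional ℝ E] {x y U₁ Ud : E}
    {l1 ld : ℝ} (hxy : x ≠ y) (hxy' : x ≠ -y) (hU : LinearIndependent ℝ ![U₁, Ud])
    (h1 : (rankOne ℝ x x - rankOne ℝ y y) U₁ = l1 • U₁)
    (hd : (rankOne ℝ x x - rankOne ℝ y y) Ud = ld • Ud)
    (hext : ∀ μ, HasEigenvalue ((rankOne ℝ x x - rankOne ℝ y y : E →L[ℝ] E) : E →ₗ[ℝ] E) μ →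
      ld ≤ μ ∧ μ ≤ l1) :
    Submodule.span ℝ {x, y} ≤ Submodule.span ℝ {U₁, Ud} := by
  have hU₁ : U₁ ≠ 0 := by simpa using hU.ne_zero 0
  have hUd : Ud ≠ 0 := by simpa using hU.ne_zero 1
  have hline : ∀ u, Submodule.span ℝ {x, y} ≤ ℝ ∙ u → u ≠ 0 → ∀ μ : ℝ, μ ≠ 0 →
      (rankOne ℝ x x - rankOne ℝ y y) u = μ • u →
      Submodule.span ℝ {x, y} ≤ Submodule.span ℝ {U₁, Ud} := by
    intro u hu hu0 μ hμ hTu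
    have hev := hext μ (hasEigenvalue_of_hasEigenvector ⟨mem_eigenspace_iff.2 hTu, hu0⟩)
    rcases hμ.lt_or_gt with hneg | hpos
    · exact (le_span_singleton_of_rankOne_sub_rankOne_apply_eq_smul hd (by linarith) hUd hu).trans
        (Submodule.span_mono (by simp))
    · exact (le_span_singleton_of_rankOne_sub_rankOne_apply_eq_smul h1 (by linarith) hU₁ hu).trans
        (Submodule.span_mono (by simp))
  by_cases hx : x ∈ ℝ ∙ y
  · obtain ⟨hy0, μ, hμ, hTy⟩ := exists_eigenvector_of_mem_span_singleton hxy hxy' hx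
    exact hline y (Submodule.span_le.2 (Set.insert_subset hx (by simp))) hy0 μ hμ hTy
  by_cases hy : y ∈ ℝ ∙ x
  · obtain ⟨hx0, μ, hμ, hTx⟩ :=
      exists_eigenvector_of_mem_span_singleton hxy.symm (by rintro rfl; simp at hxy') hy
    refine hline x (Submodule.span_le.2 (Set.insert_subset (by simp) (by simpa))) hx0 (-μ)
      (neg_ne_zero.2 hμ) ?_
    rw [← neg_sub, neg_apply, hTx, neg_smul]
  obtain ⟨w, hw⟩ : ∃ w, ⟪y, w⟫_ℝ ^ 2 < ⟪x, w⟫_ℝ ^ 2 := by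
    simpa using mt mem_span_singleton_of_forall_sq_inner_le hx
  obtain ⟨w', hw'⟩ : ∃ w, ⟪x, w⟫_ℝ ^ 2 < ⟪y, w⟫_ℝ ^ 2 := by
    simpa using mt mem_span_singleton_of_forall_sq_inner_le hy
  obtain ⟨μ, hμ, hev⟩ := exists_pos_hasEigenvalue_rankOne_sub_rankOne hw
  obtain ⟨ν, hν, hev'⟩ := exists_neg_hasEigenvalue_rankOne_sub_rankOne hw'
  have hl1 : l1 ≠ 0 := by linarith [(hext μ hev).2]
  have hld : ld ≠ 0 := by linarith [(hext ν hev').1]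
  exact (Submodule.span_pair_eq_of_linearIndependent hU
    (mem_span_pair_of_rankOne_sub_rankOne_apply_eq_smul h1 hl1)
    (mem_span_pair_of_rankOne_sub_rankOne_apply_eq_smul hd hld)).ge

end

theorem EuclideanSpace.rankOne_sub_rankOne_apply_eq_smul_iff {d : ℕ}
    (x y v : EuclideanSpace ℝ (Fin d)) (μ : ℝ) :
    (∀ i, ∑ j, (x i * x j - y i * y j) * v j = μ * v i) ↔
      (rankOne ℝ x x - rankOne ℝ y y) v = μ • v := by
  have hsum : ∀ i, ∑ j, (x i * x j - y i * y j) * v j = ((rankOne ℝ x x - rankOne ℝ y y) v) i := by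
    intro i
    simp only [sub_apply, rankOne_apply, PiLp.sub_apply, PiLp.smul_apply, smul_eq_mul,
      PiLp.inner_apply, RCLike.inner_apply, conj_trivial, Finset.sum_mul, ← Finset.sum_sub_distrib]
    exact Finset.sum_congr rfl fun j _ ↦ by ring
  simp only [hsum, WithLp.ext_iff, funext_iff, WithLp.ofLp_smul, Pi.smul_apply, smul_eq_mul]

theorem span_and_correlation_general {d : ℕ} (x xb U₁ Ud : EuclideanSpace ℝ (Fin d)) (l1 ld : ℝ)
    (hx1 : x ≠ xb) (hx2 : x ≠ -xb)
    (hU₁ : ‖U₁‖ = 1) (hUd : ‖Ud‖ = 1) (horth : ⟪U₁, Ud⟫_ℝ = 0)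
    (heig1 : ∀ i, ∑ j, (x i * x j - xb i * xb j) * U₁ j = l1 * U₁ i)
    (heigd : ∀ i, ∑ j, (x i * x j - xb i * xb j) * Ud j = ld * Ud i)
    (hextreme : ∀ (μ : ℝ) (v : EuclideanSpace ℝ (Fin d)), v ≠ 0 →
      (∀ i, ∑ j, (x i * x j - xb i * xb j) * v j = μ * v i) → ld ≤ μ ∧ μ ≤ l1) :
    Submodule.span ℝ {x, xb} ≤ Submodule.span ℝ {U₁, Ud} ∧
    ⟪x, xb⟫_ℝ = ⟪U₁, x⟫_ℝ * ⟪U₁, xb⟫_ℝ + ⟪Ud, x⟫_ℝ * ⟪Ud, xb⟫_ℝ := by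
  simp only [EuclideanSpace.rankOne_sub_rankOne_apply_eq_smul_iff] at heig1 heigd hextreme
  have hON : Orthonormal ℝ ![U₁, Ud] := by
    simp [orthonormal_vecCons_iff, hU₁, hUd, horth]
  have hspan := span_pair_le_span_of_extreme_eigenvectors hx1 hx2 hON.linearIndependent heig1 heigd
    fun μ hμ ↦
      let ⟨v, hv⟩ := hμ.exists_hasEigenvector
      hextreme μ v hv.2 (mem_eigenspace_iff.1 hv.1)
  exact ⟨hspan, hON.inner_eq_of_mem_span_pair (hspan (Submodule.subset_span (by simp))) xb⟩

/-- For `x ∉ {xb, -xb}` and orthonormal eigenvectors `U₁, Ud` of `X = x xᵀ - xb xbᵀ`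
for the largest eigenvalue `l1 ≥ 0` and smallest eigenvalue `ld ≤ 0`, one has
`span{x, xb} ⊆ span{U₁, Ud}` and `⟨x, xb⟩ = ⟨U₁,x⟩⟨U₁,xb⟩ + ⟨Ud,x⟩⟨Ud,xb⟩`. -/
theorem span_and_correlation {d : ℕ} (x xb U₁ Ud : EuclideanSpace ℝ (Fin d)) (l1 ld : ℝ)
    (hx1 : x ≠ xb) (hx2 : x ≠ -xb)
    (hU₁ : ‖U₁‖ = 1) (hUd : ‖Ud‖ = 1) (horth : ⟪U₁, Ud⟫_ℝ = 0)
    (hl1 : 0 ≤ l1) (hld : ld ≤ 0)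
    (heig1 : ∀ i, ∑ j, (x i * x j - xb i * xb j) * U₁ j = l1 * U₁ i)
    (heigd : ∀ i, ∑ j, (x i * x j - xb i * xb j) * Ud j = ld * Ud i)
    (hextreme : ∀ (μ : ℝ) (v : EuclideanSpace ℝ (Fin d)), v ≠ 0 →
      (∀ i, ∑ j, (x i * x j - xb i * xb j) * v j = μ * v i) → ld ≤ μ ∧ μ ≤ l1) :
    Submodule.span ℝ {x, xb} ≤ Submodule.span ℝ {U₁, Ud} ∧
    ⟪x, xb⟫_ℝ = ⟪U₁, x⟫_ℝ * ⟪U₁, xb⟫_ℝ + ⟪Ud, x⟫_ℝ * ⟪Ud, xb⟫_ℝ :=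
  span_and_correlation_general x xb U₁ Ud l1 ld hx1 hx2 hU₁ hUd horth heig1 heigd hextreme
end

section
/- Let f, g: ℝ^d → ℝ be lower semicontinuous functions, let l, u: ℝ^d → ℝ with l constant, and suppose l(y) ≤ f(y) - g(y) ≤ u(y) for all y. Let (x, v) satisfy the ρ-weak-convexity subgradient inequality g(y) ≥ g(x) + ⟨v, y-x⟩ - (ρ/2)‖y-x‖² for all y. Then dist((x,v), gph ∂f) ≤ √(4(ρ + √(2+ρ²)))·√(u(x) - l(x)), where gph ∂f = {(z,w) : w ∈ ∂f(z)}. -/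
open scoped InnerProductSpace

/-!
Set `s = √(2 + ρ²)` and `λ = ρ + s`, and minimise the lower semicontinuous function
`h y = f y + λ/2 ‖y - x‖² - ⟪v, y - x⟫`. The lower bound `f - g ≥ l` together with the weak
convexity inequality for `g` gives `h y ≥ g x + l + s/2 ‖y - x‖²`, so `h` is coercive and has a
global minimiser `z`. Comparing with `h x = f x ≤ g x + u x` gives `s ‖z - x‖² ≤ 2 (u x - l)`.
Minimality of `z` says that `w = v - λ (z - x)` is a proximal, hence Fréchet, hence limiting
subgradient of `f` at `z`, and `‖z - x‖² + ‖w - v‖² = (1 + λ²) ‖z - x‖² ≤ 4 λ (u x - l)` because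
`1 + λ² ≤ 2 λ s`.
-/

theorem LowerSemicontinuous.exists_forall_le_of_growth {α : Type*} [PseudoMetricSpace α]
    [ProperSpace α] {h : α → ℝ} (hh : LowerSemicontinuous h) {x : α} {a c : ℝ} (ha : 0 < a)
    (hgrowth : ∀ y, c + a * dist y x ^ 2 ≤ h y) : ∃ z, ∀ y, h z ≤ h y := by
  have hcx : 0 ≤ (h x - c) / a := div_nonneg (by simpa using hgrowth x) ha.le
  set R := √((h x - c) / a)
  obtain ⟨z, -, hz⟩ := LowerSemicontinuousOn.exists_isMinOn
    ⟨x, Metric.mem_closedBall_self (Real.sqrt_nonneg _)⟩ (isCompact_closedBall x R)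
    (hh.lowerSemicontinuousOn _)
  refine ⟨z, fun y => ?_⟩
  by_cases hy : y ∈ Metric.closedBall x R
  · exact hz hy
  · have hRy : R ^ 2 ≤ dist y x ^ 2 := by
      rw [Metric.mem_closedBall, not_le] at hy
      exact pow_le_pow_left₀ (Real.sqrt_nonneg _) hy.le 2
    have hhx : h x = c + a * R ^ 2 := by
      rw [Real.sq_sqrt hcx]; field_simp; ring
    calc h z ≤ h x := hz (Metric.mem_closedBall_self (Real.sqrt_nonneg _))
      _ ≤ c + a * dist y x ^ 2 := by rw [hhx]; gcongr
      _ ≤ h y := hgrowth y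

section InnerProductSpace

variable {E : Type*} [NormedAddCommGroup E] [InnerProductSpace ℝ E]

theorem add_inner_sub_sub_le_of_forall_prox_le {f : E → ℝ} {x v z : E} {lam : ℝ}
    (hz : ∀ y, f z + (lam / 2 * ‖z - x‖ ^ 2 - ⟪v, z - x⟫_ℝ) ≤
      f y + (lam / 2 * ‖y - x‖ ^ 2 - ⟪v, y - x⟫_ℝ)) (y : E) :
    f z + ⟪v - lam • (z - x), y - z⟫_ℝ - lam / 2 * ‖y - z‖ ^ 2 ≤ f y := by
  have hsplit : y - x = (y - z) + (z - x) := by abel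
  have hnorm := norm_add_sq_real (y - z) (z - x)
  have hinner : ⟪v, y - x⟫_ℝ = ⟪v, y - z⟫_ℝ + ⟪v, z - x⟫_ℝ := by rw [hsplit, inner_add_right]
  rw [← hsplit, real_inner_comm (z - x)] at hnorm
  have hzy := hz y
  rw [hnorm, hinner] at hzy
  rw [inner_sub_left, real_inner_smul_left]
  linarith

end InnerProductSpace

section Subdifferential

variable {d : ℕ} {f : EuclideanSpace ℝ (Fin d) → ℝ} {z w : EuclideanSpace ℝ (Fin d)}

theorem mem_frechetSubdiff_of_forall_le (c : ℝ)
    (h : ∀ y, f z + ⟪w, y - z⟫_ℝ - c * ‖y - z‖ ^ 2 ≤ f y) : w ∈ frechetSubdiff f z := by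
  intro ε hε
  refine ⟨ε / (|c| + 1), by positivity, fun y hy => ?_⟩
  have hcy : |c| * ‖y - z‖ ≤ ε :=
    calc |c| * ‖y - z‖ ≤ (|c| + 1) * (ε / (|c| + 1)) := by gcongr; linarith
      _ = ε := by field_simp
  have hquad : c * ‖y - z‖ ^ 2 ≤ ε * ‖y - z‖ :=
    calc c * ‖y - z‖ ^ 2 ≤ |c| * ‖y - z‖ ^ 2 := by gcongr; exact le_abs_self c
      _ = (|c| * ‖y - z‖) * ‖y - z‖ := by ring
      _ ≤ ε * ‖y - z‖ := by gcongr
  linarith [h y]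

theorem frechetSubdiff_subset_limitingSubdiff : frechetSubdiff f z ⊆ limitingSubdiff f z :=
  fun w hw => ⟨fun _ => z, fun _ => w, fun _ => hw, tendsto_const_nhds, tendsto_const_nhds,
    tendsto_const_nhds⟩

end Subdifferential

theorem one_add_sq_le_two_mul_mul_sqrt (ρ : ℝ) :
    1 + (ρ + √(2 + ρ ^ 2)) ^ 2 ≤ 2 * (ρ + √(2 + ρ ^ 2)) * √(2 + ρ ^ 2) := by
  nlinarith [Real.sq_sqrt (by positivity : (0 : ℝ) ≤ 2 + ρ ^ 2)]

theorem comparison_theorem_constant_lower_general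
    {d : ℕ} (f g : EuclideanSpace ℝ (Fin d) → ℝ)
    (hf : LowerSemicontinuous f)
    (l : ℝ) (u : EuclideanSpace ℝ (Fin d) → ℝ) (ρ : ℝ)
    (hlu : ∀ y, l ≤ f y - g y ∧ f y - g y ≤ u y)
    (x v : EuclideanSpace ℝ (Fin d))
    (hwc : ∀ y, g y ≥ g x + ⟪v, y - x⟫_ℝ - ρ / 2 * ‖y - x‖ ^ 2) :
    ∃ z w, w ∈ limitingSubdiff f z ∧
      Real.sqrt (‖z - x‖ ^ 2 + ‖w - v‖ ^ 2) ≤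
        Real.sqrt (4 * (ρ + Real.sqrt (2 + ρ ^ 2))) * Real.sqrt (u x - l) := by
  set s := √(2 + ρ ^ 2)
  set lam := ρ + s
  have hs : 0 < s := Real.sqrt_pos.2 (by positivity)
  have hlam : 0 ≤ lam := by
    have : |ρ| ≤ s := Real.abs_le_sqrt (by linarith)
    linarith [neg_abs_le ρ]
  have hquad : Continuous fun y => lam / 2 * ‖y - x‖ ^ 2 - ⟪v, y - x⟫_ℝ := by fun_prop
  have hgrowth : ∀ y,
      g x + l + s / 2 * dist y x ^ 2 ≤ f y + (lam / 2 * ‖y - x‖ ^ 2 - ⟪v, y - x⟫_ℝ) := by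
    intro y
    rw [dist_eq_norm]
    linarith [(hlu y).1, hwc y]
  obtain ⟨z, hz⟩ :=
    (hf.add hquad.lowerSemicontinuous).exists_forall_le_of_growth (half_pos hs) hgrowth
  have hzx : s * ‖z - x‖ ^ 2 ≤ 2 * (u x - l) := by
    have hmin := hz x
    have hgz := hgrowth z
    simp only [sub_self, norm_zero, inner_zero_right] at hmin
    rw [dist_eq_norm] at hgz
    linarith [(hlu x).2]
  refine ⟨z, v - lam • (z - x), frechetSubdiff_subset_limitingSubdiff
    (mem_frechetSubdiff_of_forall_le _ (add_inner_sub_sub_le_of_forall_prox_le hz)), ?_⟩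
  rw [← Real.sqrt_mul' _ (by linarith [(hlu x).1, (hlu x).2])]
  gcongr
  calc ‖z - x‖ ^ 2 + ‖v - lam • (z - x) - v‖ ^ 2 = (1 + lam ^ 2) * ‖z - x‖ ^ 2 := by
        rw [sub_sub_cancel_left, norm_neg, norm_smul, mul_pow, Real.norm_eq_abs, sq_abs]; ring
    _ ≤ 4 * lam * (u x - l) := by
        nlinarith [one_add_sq_le_two_mul_mul_sqrt ρ, sq_nonneg ‖z - x‖]

/-- Comparison theorem with constant lower bound `l`: if `l ≤ f - g ≤ u` and `(x, v)`
satisfies the ρ-weak-convexity subgradient inequality for `g`, then the (Euclidean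
product) distance of `(x, v)` to the graph of `∂f` is at most
`√(4(ρ + √(2+ρ²)))·√(u(x) - l)`. -/
theorem comparison_theorem_constant_lower
    {d : ℕ} (f g : EuclideanSpace ℝ (Fin d) → ℝ)
    (hf : LowerSemicontinuous f) (hg : LowerSemicontinuous g)
    (l : ℝ) (u : EuclideanSpace ℝ (Fin d) → ℝ) (ρ : ℝ) (hρ : 0 ≤ ρ)
    (hlu : ∀ y, l ≤ f y - g y ∧ f y - g y ≤ u y)
    (x v : EuclideanSpace ℝ (Fin d))
    (hwc : ∀ y, g y ≥ g x + ⟪v, y - x⟫_ℝ - ρ / 2 * ‖y - x‖ ^ 2) :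
    ∃ z w, w ∈ limitingSubdiff f z ∧
      Real.sqrt (‖z - x‖ ^ 2 + ‖w - v‖ ^ 2) ≤
        Real.sqrt (4 * (ρ + Real.sqrt (2 + ρ ^ 2))) * Real.sqrt (u x - l) :=
  comparison_theorem_constant_lower_general f g hf l u ρ hlu x v hwc
end

section
/- Let f, g: ℝ^d → ℝ be lower semicontinuous, l: ℝ^d → ℝ locally Lipschitz, and u: ℝ^d → ℝ, with l(y) ≤ f(y) - g(y) ≤ u(y) for all y. Suppose (x,v) satisfies g(y) ≥ g(x) + ⟨v, y-x⟩ - (ρ/2)‖y-x‖² for all y. Then for every γ > 0 there exists x̂ with ‖x̂ - x‖ ≤ 2γ and dist(v, ∂f(x̂)) ≤ 2ργ + (u(x) - l(x))/γ + lip(l; x̂), where lip(l; x̂) = limsup_{y→x̂} |l(y)-l(x̂)|/‖y-x̂‖. -/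
/-!
Put `φ = f - l - ⟪v, · - x⟫ + (ρ/2)‖· - x‖²`. The weak-convexity inequality for `g` and
`l ≤ f - g ≤ u` give `φ ≥ g x ≥ φ x - (u x - l x)`, so a minimizer `z` of
`φ + (u x - l x)/(4γ²) ‖· - x‖²` satisfies `‖z - x‖ ≤ 2γ`. Expanding the quadratic around `z`,
minimality says that `f - l` has at `z` the quadratic minorant with slope
`w = v - (ρ + (u x - l x)/(2γ²)) (z - x)`, and `‖v - w‖ ≤ 2ργ + (u x - l x)/γ`. Near `z`, `l` moves
by at most `(lip(l; z) + t)‖y - z‖`, so `f(y) ≥ f(z) + ⟪w, y - z⟫ - M‖y - z‖ - C‖y - z‖²` with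
`M = lip(l; z) + t`. Such a minorant forces a limiting subgradient within `M + t` of `w`:
minimizing `f - ⟪w, · - z⟫ + (M + t)√(ε² + ‖· - z‖²) + C‖· - z‖²` on a small ball gives, since the
penalty is smooth with gradient of norm `≤ M + t + 2C‖· - z‖`, Fréchet subgradients at points
that tend to `z` (with `f`-values tending to `f z`) as `ε → 0`; compactness passes to the limit.
-/

open scoped InnerProductSpace

/-- The local Lipschitz constant `lip(l; x) = limsup_{y → x} |l(y) - l(x)|/‖y - x‖`. -/
noncomputable def lipAt {d : ℕ} (l : EuclideanSpace ℝ (Fin d) → ℝ)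
    (x : EuclideanSpace ℝ (Fin d)) : ℝ :=
  Filter.limsup (fun y => |l y - l x| / ‖y - x‖) (nhdsWithin x {x}ᶜ)

open Filter Metric Set Topology

lemma norm_sub_le_of_isMinOn_add_sq {E : Type*} [SeminormedAddCommGroup E] {φ : E → ℝ} {x z : E}
    {c R : ℝ} (hc : 0 < c) (hR : 0 ≤ R)
    (hφ : ∀ y, φ x ≤ φ y + c * R ^ 2)
    (hz : IsMinOn (fun y => φ y + c * ‖y - x‖ ^ 2) univ z) : ‖z - x‖ ≤ R := by
  have h := hz (mem_univ x)
  simp only [mem_ofPred_eq, sub_self, norm_zero] at h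
  have : c * ‖z - x‖ ^ 2 ≤ c * R ^ 2 := by linarith [hφ z]
  exact (pow_le_pow_iff_left₀ (norm_nonneg _) hR two_ne_zero).1 (le_of_mul_le_mul_left this hc)

lemma exists_isMinOn_add_sq_and_norm_sub_le {E : Type*} [SeminormedAddCommGroup E] {φ : E → ℝ}
    {x : E} {D γ : ℝ} (hD : 0 ≤ D) (hγ : 0 < γ) (hφ : ∀ y, φ x ≤ φ y + D)
    (hmin : ∃ z, IsMinOn (fun y => φ y + D / (4 * γ ^ 2) * ‖y - x‖ ^ 2) univ z) :
    ∃ z, IsMinOn (fun y => φ y + D / (4 * γ ^ 2) * ‖y - x‖ ^ 2) univ z ∧ ‖z - x‖ ≤ 2 * γ := by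
  rcases hD.eq_or_lt with rfl | hDpos
  · exact ⟨x, fun y _ => by simpa using hφ y, by rw [sub_self, norm_zero]; positivity⟩
  · obtain ⟨z, hz⟩ := hmin
    refine ⟨z, hz, norm_sub_le_of_isMinOn_add_sq (by positivity) (by positivity) (fun y => ?_) hz⟩
    have hR : D / (4 * γ ^ 2) * (2 * γ) ^ 2 = D := by field_simp; ring
    rw [hR]
    exact hφ y

section InnerProductSpace

variable {E : Type*} [NormedAddCommGroup E] [InnerProductSpace ℝ E]

lemma add_inner_sub_mul_sq_le_of_forall_le {F : E → ℝ} {x v z : E} {c : ℝ}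
    (hz : ∀ y, F z - ⟪v, z - x⟫_ℝ + c * ‖z - x‖ ^ 2 ≤ F y - ⟪v, y - x⟫_ℝ + c * ‖y - x‖ ^ 2)
    (y : E) : F z + ⟪v - (2 * c) • (z - x), y - z⟫_ℝ - c * ‖y - z‖ ^ 2 ≤ F y := by
  have hsplit : ‖y - x‖ ^ 2 = ‖y - z‖ ^ 2 + 2 * ⟪y - z, z - x⟫_ℝ + ‖z - x‖ ^ 2 := by
    rw [← norm_add_sq_real, sub_add_sub_cancel]
  have hinner : ⟪v, y - x⟫_ℝ = ⟪v, y - z⟫_ℝ + ⟪v, z - x⟫_ℝ := by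
    rw [← inner_add_right, sub_add_sub_cancel]
  rw [inner_sub_left, real_inner_smul_left, real_inner_comm (y - z) (z - x)]
  linear_combination hz y + c * hsplit - hinner

lemma hasFDerivAt_sqrt_sq_add_norm_sub_sq (z y : E) {ε : ℝ} (hε : ε ≠ 0) :
    HasFDerivAt (fun p => √(ε ^ 2 + ‖p - z‖ ^ 2))
      (innerSL ℝ ((√(ε ^ 2 + ‖y - z‖ ^ 2))⁻¹ • (y - z))) y := by
  have hpos : 0 < ε ^ 2 + ‖y - z‖ ^ 2 := by positivity
  refine (((hasFDerivAt_id y).sub_const z).norm_sq.const_add (ε ^ 2)).sqrt hpos.ne'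
    |>.congr_fderiv ?_
  ext h
  simp
  field_simp

end InnerProductSpace

section Euclidean

variable {d : ℕ} {f l : EuclideanSpace ℝ (Fin d) → ℝ}

lemma LocallyLipschitz.isBoundedUnder_lipAt (hl : LocallyLipschitz l)
    (z : EuclideanSpace ℝ (Fin d)) :
    IsBoundedUnder (· ≤ ·) (𝓝[≠] z) (fun y => |l y - l z| / ‖y - z‖) := by
  obtain ⟨K, U, hU, hlK⟩ := hl z
  refine ⟨K, eventually_map.2 ?_⟩
  filter_upwards [mem_nhdsWithin_of_mem_nhds hU] with y hy
  rw [← Real.dist_eq, ← dist_eq_norm]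
  exact div_le_of_le_mul₀ dist_nonneg K.2 (hlK.dist_le_mul y hy z (mem_of_mem_nhds hU))

lemma LocallyLipschitz.lipAt_nonneg (hl : LocallyLipschitz l) (z : EuclideanSpace ℝ (Fin d)) :
    0 ≤ lipAt l z := by
  rcases (𝓝[≠] z).eq_or_neBot with hbot | hne
  -- in dimension 0 the filter is `⊥`, and the limsup is the junk value `sInf univ = 0`
  · simp [lipAt, hbot, limsup_eq]
  · exact le_limsup_of_frequently_le (Frequently.of_forall fun y => by positivity)
      (hl.isBoundedUnder_lipAt z)

lemma LocallyLipschitz.eventually_abs_sub_le_lipAt_add (hl : LocallyLipschitz l)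
    (z : EuclideanSpace ℝ (Fin d)) {s : ℝ} (hs : 0 < s) :
    ∀ᶠ y in 𝓝 z, |l y - l z| ≤ (lipAt l z + s) * ‖y - z‖ := by
  have h := eventually_lt_of_limsup_lt (lt_add_of_pos_right (lipAt l z) hs)
    (hl.isBoundedUnder_lipAt z)
  filter_upwards [eventually_nhdsWithin_iff.1 h] with y hy
  rcases eq_or_ne y z with rfl | hyz
  · simp
  · exact (div_lt_iff₀ (norm_pos_iff.2 (sub_ne_zero.2 hyz))).1 (hy hyz) |>.le

lemma neg_mem_frechetSubdiff_of_isLocalMin_add {s : EuclideanSpace ℝ (Fin d) → ℝ}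
    {y g : EuclideanSpace ℝ (Fin d)} (hmin : IsLocalMin (fun p => f p + s p) y)
    (hs : HasFDerivAt s (innerSL ℝ g) y) : -g ∈ frechetSubdiff f y := by
  intro ε hε
  obtain ⟨δ, hδ, hball⟩ := Metric.eventually_nhds_iff.1 (hmin.and (hs.isLittleO.def hε))
  refine ⟨δ, hδ, fun p hp => ?_⟩
  obtain ⟨hp_min, hp_taylor⟩ := hball (by rwa [dist_eq_norm])
  rw [innerSL_apply_apply, Real.norm_eq_abs] at hp_taylor
  rw [inner_neg_left]
  linarith [le_abs_self (s p - s y - ⟪g, p - y⟫_ℝ), (hp_min : f y + s y ≤ f p + s p)]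

lemma exists_mem_limitingSubdiff_of_tendsto {z w : EuclideanSpace ℝ (Fin d)} {b : ℝ}
    {y ξ : ℕ → EuclideanSpace ℝ (Fin d)} {B : ℕ → ℝ}
    (hy : Tendsto y atTop (𝓝 z)) (hfy : Tendsto (fun n => f (y n)) atTop (𝓝 (f z)))
    (hξ : ∀ n, ξ n ∈ frechetSubdiff f (y n)) (hξB : ∀ n, ‖w - ξ n‖ ≤ B n)
    (hB : Tendsto B atTop (𝓝 b)) : ∃ ξ' ∈ limitingSubdiff f z, ‖w - ξ'‖ ≤ b := by
  obtain ⟨R, hR⟩ := hB.bddAbove_range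
  have hξR : ∀ n, ξ n ∈ closedBall w R := fun n => by
    rw [mem_closedBall, dist_comm, dist_eq_norm]
    exact (hξB n).trans (hR (mem_range_self n))
  obtain ⟨ξ', -, φ, hφ, hlim⟩ := (isCompact_closedBall w R).tendsto_subseq hξR
  refine ⟨ξ', ⟨y ∘ φ, ξ ∘ φ, fun n => hξ (φ n), hy.comp hφ.tendsto_atTop,
    hfy.comp hφ.tendsto_atTop, hlim⟩, ?_⟩
  exact le_of_tendsto_of_tendsto' (tendsto_const_nhds.sub hlim).norm
    (hB.comp hφ.tendsto_atTop) fun n => hξB (φ n)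

lemma exists_mem_frechetSubdiff_near_of_forall_le (hf : LowerSemicontinuous f)
    {z w : EuclideanSpace ℝ (Fin d)} {M C t r δ : ℝ} (hM : 0 ≤ M) (hC : 0 ≤ C) (ht : 0 < t)
    (hδ : 0 < δ) (hδr : δ < r)
    (H : ∀ y ∈ closedBall z r, f z + ⟪w, y - z⟫_ℝ - M * ‖y - z‖ - C * ‖y - z‖ ^ 2 ≤ f y) :
    ∃ y, ‖y - z‖ ≤ δ ∧ f y ≤ f z + ⟪w, y - z⟫_ℝ + t * δ ∧
      ∃ ξ ∈ frechetSubdiff f y, ‖w - ξ‖ ≤ M + t + 2 * C * δ := by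
  set ε := t * δ / (M + t) with hε_def
  have hε : 0 < ε := by positivity
  have hMtε : (M + t) * ε = t * δ := by rw [hε_def]; field_simp
  set s : EuclideanSpace ℝ (Fin d) → ℝ :=
    fun p => -⟪w, p - z⟫_ℝ + (M + t) * √(ε ^ 2 + ‖p - z‖ ^ 2) + C * ‖p - z‖ ^ 2 with hs_def
  have hs_cont : Continuous s := by fun_prop
  obtain ⟨y, hyK, hymin⟩ := ((hf.add hs_cont.lowerSemicontinuous).lowerSemicontinuousOn _
    ).exists_isMinOn ⟨z, mem_closedBall_self (hδ.trans hδr).le⟩ (isCompact_closedBall z r)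
  set h := √(ε ^ 2 + ‖y - z‖ ^ 2)
  have hh : 0 < h := Real.sqrt_pos.2 (by positivity)
  have hyh : ‖y - z‖ ≤ h := Real.le_sqrt_of_sq_le (by nlinarith)
  have hy_le_z : f y + s y ≤ f z + t * δ := by
    simpa [hs_def, Real.sqrt_sq hε.le, hMtε] using
      hymin (mem_closedBall_self (hδ.trans hδr).le)
  have hyδ : ‖y - z‖ ≤ δ := by
    have hMth : (M + t) * ‖y - z‖ ≤ (M + t) * h := by gcongr
    have := H y hyK
    nlinarith
  have hfy : f y ≤ f z + ⟪w, y - z⟫_ℝ + t * δ := by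
    have : 0 ≤ (M + t) * h + C * ‖y - z‖ ^ 2 := by positivity
    linarith
  have hymin_loc : IsLocalMin (fun p => f p + s p) y :=
    hymin.isLocalMin (closedBall_mem_nhds_of_mem (mem_ball_iff_norm.2 (hyδ.trans_lt hδr)))
  set c := (M + t) * h⁻¹ + 2 * C
  have hs_deriv : HasFDerivAt s (innerSL ℝ (-w + c • (y - z))) y := by
    refine ((((innerSL ℝ w).hasFDerivAt.comp y ((hasFDerivAt_id y).sub_const z)).neg.add
      ((hasFDerivAt_sqrt_sq_add_norm_sub_sq z y hε.ne').const_mul (M + t))).add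
      (((hasFDerivAt_id y).sub_const z).norm_sq.const_mul C)).congr_fderiv ?_
    ext q
    simp [c]
    ring
  refine ⟨y, hyδ, hfy, _, neg_mem_frechetSubdiff_of_isLocalMin_add hymin_loc hs_deriv, ?_⟩
  have hc : 0 ≤ c := by positivity
  calc ‖w - -(-w + c • (y - z))‖ = (M + t) * (‖y - z‖ / h) + 2 * C * ‖y - z‖ := by
        rw [sub_neg_eq_add, add_neg_cancel_left, norm_smul, Real.norm_of_nonneg hc]
        ring
    _ ≤ (M + t) * 1 + 2 * C * δ := by
        gcongr
        exact div_le_one_of_le₀ hyh hh.le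
    _ = M + t + 2 * C * δ := by ring

lemma exists_mem_limitingSubdiff_of_eventually_le (hf : LowerSemicontinuous f)
    {z w : EuclideanSpace ℝ (Fin d)} {M C t : ℝ} (hM : 0 ≤ M) (hC : 0 ≤ C) (ht : 0 < t)
    (H : ∀ᶠ y in 𝓝 z, f z + ⟪w, y - z⟫_ℝ - M * ‖y - z‖ - C * ‖y - z‖ ^ 2 ≤ f y) :
    ∃ ξ ∈ limitingSubdiff f z, ‖w - ξ‖ ≤ M + t := by
  obtain ⟨r, hr, H⟩ := nhds_basis_closedBall.eventually_iff.1 H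
  set δ : ℕ → ℝ := fun n => r / (n + 2)
  have hδ_pos : ∀ n, 0 < δ n := fun n => by positivity
  have hδ_lt : ∀ n, δ n < r := fun n => div_lt_self hr (by linarith [n.cast_nonneg (α := ℝ)])
  have hδ_lim : Tendsto δ atTop (𝓝 0) :=
    tendsto_const_nhds.div_atTop (tendsto_atTop_add_const_right _ _ tendsto_natCast_atTop_atTop)
  choose y hyδ hfy ξ hξ hξw using fun n =>
    exists_mem_frechetSubdiff_near_of_forall_le hf hM hC ht (hδ_pos n) (hδ_lt n) H
  have hy : Tendsto y atTop (𝓝 z) :=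
    tendsto_iff_norm_sub_tendsto_zero.2 (squeeze_zero (fun n => norm_nonneg _) hyδ hδ_lim)
  have hfy_close : ∀ n, ‖f (y n) - f z‖ ≤ (‖w‖ + M + t + C * r) * δ n := fun n => by
    have hyr : ‖y n - z‖ ≤ r := (hyδ n).trans (hδ_lt n).le
    obtain ⟨hinner_lo, hinner_hi⟩ := abs_le.1 ((abs_real_inner_le_norm w (y n - z)).trans
      (mul_le_mul_of_nonneg_left (hyδ n) (norm_nonneg w)))
    have hM_le : M * ‖y n - z‖ ≤ M * δ n := mul_le_mul_of_nonneg_left (hyδ n) hM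
    have hC_le : C * ‖y n - z‖ ^ 2 ≤ C * r * δ n := by
      rw [sq, mul_comm (‖y n - z‖), ← mul_assoc]
      exact mul_le_mul (mul_le_mul_of_nonneg_left hyr hC) (hyδ n) (norm_nonneg _) (by positivity)
    have hlow := H (mem_closedBall_iff_norm.2 hyr)
    have hMδ : 0 ≤ M * δ n := by positivity
    have htδ : 0 ≤ t * δ n := by positivity
    have hCδ : 0 ≤ C * r * δ n := by positivity
    rw [Real.norm_eq_abs, abs_le]
    constructor <;> linarith [hfy n]
  have hfy_lim : Tendsto (fun n => f (y n)) atTop (𝓝 (f z)) :=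
    tendsto_iff_norm_sub_tendsto_zero.2 (squeeze_zero (fun n => norm_nonneg _) hfy_close
      (by simpa using hδ_lim.const_mul (‖w‖ + M + t + C * r)))
  exact exists_mem_limitingSubdiff_of_tendsto hy hfy_lim hξ hξw
    (by simpa using tendsto_const_nhds.add (hδ_lim.const_mul (2 * C)))

lemma exists_mem_limitingSubdiff_of_forall_sub_le (hf : LowerSemicontinuous f)
    (hl : LocallyLipschitz l) {z w : EuclideanSpace ℝ (Fin d)}
    {C t : ℝ} (hC : 0 ≤ C) (ht : 0 < t)
    (H : ∀ y, f z - l z + ⟪w, y - z⟫_ℝ - C * ‖y - z‖ ^ 2 ≤ f y - l y) :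
    ∃ ξ ∈ limitingSubdiff f z, ‖w - ξ‖ ≤ lipAt l z + t := by
  have hM : 0 ≤ lipAt l z + t / 2 := add_nonneg (hl.lipAt_nonneg z) (by positivity)
  obtain ⟨ξ, hξ, hwξ⟩ :=
      exists_mem_limitingSubdiff_of_eventually_le (w := w) hf hM hC (half_pos ht) <| by
    filter_upwards [hl.eventually_abs_sub_le_lipAt_add z (half_pos ht)] with y hy
    linarith [H y, neg_abs_le (l y - l z)]
  exact ⟨ξ, hξ, by linarith⟩

end Euclidean

theorem comparison_theorem_general
    {d : ℕ} (f g : EuclideanSpace ℝ (Fin d) → ℝ)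
    (hf : LowerSemicontinuous f)
    (l u : EuclideanSpace ℝ (Fin d) → ℝ) (hl : LocallyLipschitz l) (ρ : ℝ) (hρ : 0 ≤ ρ)
    (hlu : ∀ y, l y ≤ f y - g y ∧ f y - g y ≤ u y)
    (x v : EuclideanSpace ℝ (Fin d))
    (hwc : ∀ y, g y ≥ g x + ⟪v, y - x⟫_ℝ - ρ / 2 * ‖y - x‖ ^ 2)
    (hmin : ∀ γ : ℝ, 0 < γ → ∃ z, IsMinOn
      (fun y => f y - ⟪v, y - x⟫_ℝ + ρ / 2 * ‖y - x‖ ^ 2 - l y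
        + (u x - l x) / (4 * γ ^ 2) * ‖y - x‖ ^ 2) Set.univ z) :
    ∀ γ : ℝ, 0 < γ → ∃ xh, ‖xh - x‖ ≤ 2 * γ ∧
      Metric.infDist v (limitingSubdiff f xh) ≤ 2 * ρ * γ + (u x - l x) / γ + lipAt l xh := by
  intro γ hγ
  set D := u x - l x
  have hD : 0 ≤ D := by linarith [hlu x]
  set φ := fun y => f y - ⟪v, y - x⟫_ℝ + ρ / 2 * ‖y - x‖ ^ 2 - l y
  have hφ : ∀ y, φ x ≤ φ y + D := fun y => by
    simp only [φ, D, sub_self, inner_zero_right, norm_zero]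
    linarith [hlu x, hlu y, hwc y]
  obtain ⟨z, hz_min, hzx⟩ := exists_isMinOn_add_sq_and_norm_sub_le hD hγ hφ (hmin γ hγ)
  set c := ρ / 2 + D / (4 * γ ^ 2) with hc_def
  set w := v - (2 * c) • (z - x)
  have hvw : ‖v - w‖ ≤ 2 * ρ * γ + D / γ := by
    rw [sub_sub_cancel, norm_smul, Real.norm_of_nonneg (by positivity)]
    calc 2 * c * ‖z - x‖ ≤ 2 * c * (2 * γ) := by gcongr
      _ = 2 * ρ * γ + D / γ := by rw [hc_def]; field_simp; ring
  have hminor : ∀ y, f z - l z + ⟪w, y - z⟫_ℝ - c * ‖y - z‖ ^ 2 ≤ f y - l y :=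
    add_inner_sub_mul_sq_le_of_forall_le (F := fun y => f y - l y) fun y => by
      have := isMinOn_univ_iff.1 hz_min y
      simp only [φ] at this
      rw [hc_def]
      linarith
  refine ⟨z, hzx, le_of_forall_pos_le_add fun t ht => ?_⟩
  obtain ⟨ξ, hξ, hwξ⟩ := exists_mem_limitingSubdiff_of_forall_sub_le hf hl (by positivity) ht hminor
  calc infDist v (limitingSubdiff f z) ≤ ‖v - w‖ + ‖w - ξ‖ :=
        (infDist_le_dist_of_mem hξ).trans_eq (dist_eq_norm _ _) |>.trans
          (norm_sub_le_norm_sub_add_norm_sub _ _ _)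
    _ ≤ 2 * ρ * γ + D / γ + lipAt l z + t := by linarith

/-- Comparison theorem: if `l ≤ f - g ≤ u` with `l` locally Lipschitz and `(x, v)`
satisfies the ρ-weak-convexity subgradient inequality for `g`, then for every `γ > 0`
there is `xh` with `‖xh - x‖ ≤ 2γ` and
`dist(v, ∂f(xh)) ≤ 2ργ + (u(x) - l(x))/γ + lip(l; xh)`. -/
theorem comparison_theorem
    {d : ℕ} (f g : EuclideanSpace ℝ (Fin d) → ℝ)
    (hf : LowerSemicontinuous f) (hg : LowerSemicontinuous g)
    (l u : EuclideanSpace ℝ (Fin d) → ℝ) (hl : LocallyLipschitz l) (ρ : ℝ) (hρ : 0 ≤ ρ)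
    (hlu : ∀ y, l y ≤ f y - g y ∧ f y - g y ≤ u y)
    (x v : EuclideanSpace ℝ (Fin d))
    (hwc : ∀ y, g y ≥ g x + ⟪v, y - x⟫_ℝ - ρ / 2 * ‖y - x‖ ^ 2)
    (hmin : ∀ γ : ℝ, 0 < γ → ∃ z, IsMinOn
      (fun y => f y - ⟪v, y - x⟫_ℝ + ρ / 2 * ‖y - x‖ ^ 2 - l y
        + (u x - l x) / (4 * γ ^ 2) * ‖y - x‖ ^ 2) Set.univ z) :
    ∀ γ : ℝ, 0 < γ → ∃ xh, ‖xh - x‖ ≤ 2 * γ ∧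
      Metric.infDist v (limitingSubdiff f xh) ≤ 2 * ρ * γ + (u x - l x) / γ + lipAt l xh :=
  comparison_theorem_general f g hf l u hl ρ hρ hlu x v hwc hmin
end

section
/- Fix 0 ≤ ε < 1/3 and nonzero vectors x, x̄ ∈ ℝ^d. Suppose X = xx^T - x̄x̄^T satisfies λ_max(X) = -c²·λ_min(X) for some c > 0 and |⟨x, x̄⟩| ≤ ε‖x‖‖x̄‖. Then 1 - (1+c²)(ε + ε²) ≤ c²‖x̄‖²/‖x‖² ≤ 1 + (1+c²)(ε + ε²). -/
/-!
`X = x xᵀ - x̄ x̄ᵀ` has rank at most two, and on `span {x, x̄}` it has trace `‖x‖² - ‖x̄‖²` and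
determinant `⟪x, x̄⟫² - ‖x‖²‖x̄‖² < 0`. So its nonzero eigenvalues are the roots of
`(μ - ‖x‖²)(μ + ‖x̄‖²) = -⟪x, x̄⟫²`, and the test vectors `‖x̄‖² x - ⟪x, x̄⟫ x̄` and
`‖x‖² x̄ - ⟪x, x̄⟫ x` show that `λ_max > 0 > λ_min` are both of them. Vieta together with
`λ_max = -c² λ_min` gives `c²‖x̄‖² - ‖x‖² = (c² - 1)(‖x‖² - λ_max)`, while the root equation gives
`0 ≤ ‖x‖² - λ_max ≤ ⟪x, x̄⟫² / ‖x̄‖² ≤ ε² ‖x‖²`.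
-/

open Matrix
open scoped InnerProductSpace

section VecMulVec

variable {n K : Type*} [Fintype n] [Field K] (u v : n → K)

lemma vecMulVec_sub_vecMulVec_mulVec (w : n → K) :
    (vecMulVec u u - vecMulVec v v) *ᵥ w = (u ⬝ᵥ w) • u - (v ⬝ᵥ w) • v := by
  simp [sub_mulVec, vecMulVec_mulVec]

lemma dotProduct_vecMulVec_sub_vecMulVec_mulVec (w : n → K) :
    w ⬝ᵥ (vecMulVec u u - vecMulVec v v) *ᵥ w = (u ⬝ᵥ w) ^ 2 - (v ⬝ᵥ w) ^ 2 := by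
  simp only [vecMulVec_sub_vecMulVec_mulVec, dotProduct_comm w, sub_dotProduct,
    smul_dotProduct, smul_eq_mul]
  ring

lemma vecMulVec_sub_vecMulVec_eigenvalue_eq {μ : K} {w : n → K}
    (hw : (vecMulVec u u - vecMulVec v v) *ᵥ w = μ • w) (hw0 : w ≠ 0) (hμ : μ ≠ 0) :
    (μ - u ⬝ᵥ u) * (μ + v ⬝ᵥ v) = -(u ⬝ᵥ v) ^ 2 := by
  rw [vecMulVec_sub_vecMulVec_mulVec] at hw
  set p := u ⬝ᵥ w
  set q := v ⬝ᵥ w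
  -- `(p, q)` solves a 2 × 2 linear system whose determinant is the quadratic in `μ`.
  have hu : p * (u ⬝ᵥ u) - q * (u ⬝ᵥ v) = μ * p := by
    simpa [dotProduct_sub, dotProduct_smul] using congrArg (u ⬝ᵥ ·) hw
  have hv : p * (u ⬝ᵥ v) - q * (v ⬝ᵥ v) = μ * q := by
    simpa [dotProduct_sub, dotProduct_smul, dotProduct_comm v u] using congrArg (v ⬝ᵥ ·) hw
  by_contra hne
  have hp : p = 0 := by
    refine (mul_eq_zero.mp ?_).resolve_left (sub_ne_zero.mpr hne)
    linear_combination (-(μ + v ⬝ᵥ v)) * hu + (u ⬝ᵥ v) * hv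
  have hq : q = 0 := by
    refine (mul_eq_zero.mp ?_).resolve_left (sub_ne_zero.mpr hne)
    linear_combination (-(u ⬝ᵥ v)) * hu + (u ⬝ᵥ u - μ) * hv
  simp [hp, hq, eq_comm (a := (0 : n → K)), hμ, hw0] at hw

end VecMulVec

namespace Matrix.IsHermitian

variable {n : Type*} [Fintype n] [DecidableEq n]

section Rayleigh

variable {A : Matrix n n ℝ}

lemma posSemidef_sub_algebraMap (hA : A.IsHermitian) {r : ℝ}
    (hr : ∀ i, r ≤ hA.eigenvalues i) : (A - algebraMap ℝ _ r).PosSemidef := by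
  rw [posSemidef_iff_isHermitian_and_spectrum_nonneg, ← spectrum.sub_singleton_eq,
    hA.spectrum_real_eq_range_eigenvalues]
  refine ⟨hA.sub (isHermitian_diagonal _), ?_⟩
  rintro _ ⟨_, ⟨i, rfl⟩, _, rfl, rfl⟩
  simpa using hr i

lemma posSemidef_algebraMap_sub (hA : A.IsHermitian) {r : ℝ}
    (hr : ∀ i, hA.eigenvalues i ≤ r) : (algebraMap ℝ _ r - A).PosSemidef := by
  rw [posSemidef_iff_isHermitian_and_spectrum_nonneg, ← spectrum.singleton_sub_eq,
    hA.spectrum_real_eq_range_eigenvalues]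
  refine ⟨(isHermitian_diagonal _).sub hA, ?_⟩
  rintro _ ⟨_, rfl, _, ⟨i, rfl⟩, rfl⟩
  simpa using hr i

lemma dotProduct_mulVec_le_iSup_eigenvalues_mul (hA : A.IsHermitian) (w : n → ℝ) :
    w ⬝ᵥ A *ᵥ w ≤ (⨆ i, hA.eigenvalues i) * (w ⬝ᵥ w) := by
  have := (hA.posSemidef_algebraMap_sub
    fun i ↦ le_ciSup (Finite.bddAbove_range hA.eigenvalues) i).dotProduct_mulVec_nonneg w
  simpa [Algebra.algebraMap_eq_smul_one, sub_mulVec, smul_mulVec] using this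

lemma iInf_eigenvalues_mul_le_dotProduct_mulVec (hA : A.IsHermitian) (w : n → ℝ) :
    (⨅ i, hA.eigenvalues i) * (w ⬝ᵥ w) ≤ w ⬝ᵥ A *ᵥ w := by
  have := (hA.posSemidef_sub_algebraMap
    fun i ↦ ciInf_le (Finite.bddBelow_range hA.eigenvalues) i).dotProduct_mulVec_nonneg w
  simpa [Algebra.algebraMap_eq_smul_one, sub_mulVec, smul_mulVec] using this

end Rayleigh

variable {u v : n → ℝ}

lemma vecMulVec_sub_vecMulVec_eigenvalues_eq
    (hX : (vecMulVec u u - vecMulVec v v).IsHermitian) {i : n} (hi : hX.eigenvalues i ≠ 0) :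
    (hX.eigenvalues i - u ⬝ᵥ u) * (hX.eigenvalues i + v ⬝ᵥ v) = -(u ⬝ᵥ v) ^ 2 :=
  vecMulVec_sub_vecMulVec_eigenvalue_eq u v (hX.mulVec_eigenvectorBasis i)
    (by simpa using hX.eigenvectorBasis.orthonormal.ne_zero i) hi

lemma vecMulVec_sub_vecMulVec_iSup_eigenvalues_pos
    (hX : (vecMulVec u u - vecMulVec v v).IsHermitian)
    (huv : (u ⬝ᵥ v) ^ 2 < (u ⬝ᵥ u) * (v ⬝ᵥ v)) : 0 < ⨆ i, hX.eigenvalues i := by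
  set w := (v ⬝ᵥ v) • u - (u ⬝ᵥ v) • v
  have hu : u ⬝ᵥ w = (u ⬝ᵥ u) * (v ⬝ᵥ v) - (u ⬝ᵥ v) ^ 2 := by
    simp only [w, dotProduct_sub, dotProduct_smul, smul_eq_mul]; ring
  have hv : v ⬝ᵥ w = 0 := by
    simp only [w, dotProduct_sub, dotProduct_smul, smul_eq_mul, dotProduct_comm v u]; ring
  have h := hX.dotProduct_mulVec_le_iSup_eigenvalues_mul w
  rw [dotProduct_vecMulVec_sub_vecMulVec_mulVec, hu, hv] at h
  have hww : 0 ≤ w ⬝ᵥ w := Finset.sum_nonneg fun i _ ↦ mul_self_nonneg (w i)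
  exact pos_of_mul_pos_left (by nlinarith [pow_pos (sub_pos.mpr huv) 2]) hww

lemma vecMulVec_sub_vecMulVec_iInf_eigenvalues_neg
    (hX : (vecMulVec u u - vecMulVec v v).IsHermitian)
    (huv : (u ⬝ᵥ v) ^ 2 < (u ⬝ᵥ u) * (v ⬝ᵥ v)) : (⨅ i, hX.eigenvalues i) < 0 := by
  set w := (u ⬝ᵥ u) • v - (u ⬝ᵥ v) • u
  have hu : u ⬝ᵥ w = 0 := by
    simp only [w, dotProduct_sub, dotProduct_smul, smul_eq_mul]; ring
  have hv : v ⬝ᵥ w = (u ⬝ᵥ u) * (v ⬝ᵥ v) - (u ⬝ᵥ v) ^ 2 := by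
    simp only [w, dotProduct_sub, dotProduct_smul, smul_eq_mul, dotProduct_comm v u]; ring
  have h := hX.iInf_eigenvalues_mul_le_dotProduct_mulVec w
  rw [dotProduct_vecMulVec_sub_vecMulVec_mulVec, hu, hv] at h
  have hww : 0 ≤ w ⬝ᵥ w := Finset.sum_nonneg fun i _ ↦ mul_self_nonneg (w i)
  exact neg_of_mul_neg_left (by nlinarith [pow_pos (sub_pos.mpr huv) 2]) hww

lemma vecMulVec_sub_vecMulVec_iSup_eigenvalues_eq [Nonempty n]
    (hX : (vecMulVec u u - vecMulVec v v).IsHermitian)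
    (huv : (u ⬝ᵥ v) ^ 2 < (u ⬝ᵥ u) * (v ⬝ᵥ v)) :
    ((⨆ i, hX.eigenvalues i) - u ⬝ᵥ u) * ((⨆ i, hX.eigenvalues i) + v ⬝ᵥ v) =
      -(u ⬝ᵥ v) ^ 2 := by
  obtain ⟨i, hi⟩ := exists_eq_ciSup_of_finite (f := hX.eigenvalues)
  rw [← hi]
  exact hX.vecMulVec_sub_vecMulVec_eigenvalues_eq
    (hi ▸ (hX.vecMulVec_sub_vecMulVec_iSup_eigenvalues_pos huv).ne')

lemma vecMulVec_sub_vecMulVec_iSup_add_iInf_eigenvalues [Nonempty n]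
    (hX : (vecMulVec u u - vecMulVec v v).IsHermitian)
    (huv : (u ⬝ᵥ v) ^ 2 < (u ⬝ᵥ u) * (v ⬝ᵥ v)) :
    (⨆ i, hX.eigenvalues i) + (⨅ i, hX.eigenvalues i) = u ⬝ᵥ u - v ⬝ᵥ v := by
  have hM := hX.vecMulVec_sub_vecMulVec_iSup_eigenvalues_eq huv
  have hMm : (⨅ i, hX.eigenvalues i) < ⨆ i, hX.eigenvalues i :=
    (hX.vecMulVec_sub_vecMulVec_iInf_eigenvalues_neg huv).trans
      (hX.vecMulVec_sub_vecMulVec_iSup_eigenvalues_pos huv)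
  obtain ⟨j, hj⟩ := exists_eq_ciInf_of_finite (f := hX.eigenvalues)
  have hm := hX.vecMulVec_sub_vecMulVec_eigenvalues_eq (i := j)
    (hj ▸ (hX.vecMulVec_sub_vecMulVec_iInf_eigenvalues_neg huv).ne)
  rw [hj] at hm
  have := mul_eq_zero.mp (by linear_combination hM - hm :
    ((⨆ i, hX.eigenvalues i) - ⨅ i, hX.eigenvalues i) *
      ((⨆ i, hX.eigenvalues i) + (⨅ i, hX.eigenvalues i) - (u ⬝ᵥ u - v ⬝ᵥ v)) = 0)
  linarith [this.resolve_left (sub_ne_zero.mpr hMm.ne')]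

lemma vecMulVec_sub_vecMulVec_iSup_eigenvalues_le [Nonempty n]
    (hX : (vecMulVec u u - vecMulVec v v).IsHermitian)
    (huv : (u ⬝ᵥ v) ^ 2 < (u ⬝ᵥ u) * (v ⬝ᵥ v)) :
    (⨆ i, hX.eigenvalues i) ≤ u ⬝ᵥ u := by
  have hM := hX.vecMulVec_sub_vecMulVec_iSup_eigenvalues_pos huv
  have hroot := hX.vecMulVec_sub_vecMulVec_iSup_eigenvalues_eq huv
  have hv : 0 ≤ v ⬝ᵥ v := Finset.sum_nonneg fun i _ ↦ mul_self_nonneg (v i)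
  nlinarith [sq_nonneg (u ⬝ᵥ v)]

lemma vecMulVec_sub_vecMulVec_mul_sub_iSup_eigenvalues_le [Nonempty n]
    (hX : (vecMulVec u u - vecMulVec v v).IsHermitian)
    (huv : (u ⬝ᵥ v) ^ 2 < (u ⬝ᵥ u) * (v ⬝ᵥ v)) :
    (v ⬝ᵥ v) * (u ⬝ᵥ u - ⨆ i, hX.eigenvalues i) ≤ (u ⬝ᵥ v) ^ 2 := by
  have hM := hX.vecMulVec_sub_vecMulVec_iSup_eigenvalues_pos huv
  have hroot := hX.vecMulVec_sub_vecMulVec_iSup_eigenvalues_eq huv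
  have hle := hX.vecMulVec_sub_vecMulVec_iSup_eigenvalues_le huv
  nlinarith

end Matrix.IsHermitian

lemma abs_sq_mul_sub_le_of_add_eq {a b M m c : ℝ} (hsum : M + m = a - b)
    (hratio : M = -c ^ 2 * m) (hM : M ≤ a) :
    |c ^ 2 * b - a| ≤ (1 + c ^ 2) * (a - M) := by
  have hkey : c ^ 2 * b - a = (c ^ 2 - 1) * (a - M) := by
    linear_combination c ^ 2 * hsum - hratio
  rw [hkey, abs_mul, abs_of_nonneg (sub_nonneg.mpr hM)]
  gcongr
  exact abs_sub_le_iff.mpr ⟨by linarith [sq_nonneg c], by linarith [sq_nonneg c]⟩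

lemma EuclideanSpace.real_norm_sq_eq_dotProduct {ι : Type*} [Fintype ι]
    (x : EuclideanSpace ℝ ι) : ‖x‖ ^ 2 = x ⬝ᵥ x := by
  rw [← real_inner_self_eq_norm_sq]; rfl

lemma EuclideanSpace.sq_dotProduct_le_of_abs_inner_le {ι : Type*} [Fintype ι]
    {x y : EuclideanSpace ℝ ι} {ε : ℝ} (h : |⟪x, y⟫_ℝ| ≤ ε * ‖x‖ * ‖y‖) :
    (x ⬝ᵥ y) ^ 2 ≤ ε ^ 2 * ((x ⬝ᵥ x) * (y ⬝ᵥ y)) := by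
  have hxy : ⟪x, y⟫_ℝ = x ⬝ᵥ y := by
    rw [EuclideanSpace.inner_eq_star_dotProduct, star_trivial, dotProduct_comm]
  rw [← real_norm_sq_eq_dotProduct, ← real_norm_sq_eq_dotProduct, ← hxy, ← sq_abs]
  exact (pow_le_pow_left₀ (abs_nonneg _) h 2).trans_eq (by ring)

theorem near_orthogonal_norm_ratio_general {d : ℕ} (hd : 0 < d) (ε c : ℝ)
    (hε0 : 0 ≤ ε) (hε : ε < 1 / 3)
    (x xb : EuclideanSpace ℝ (Fin d)) (hx : x ≠ 0) (hxb : xb ≠ 0)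
    (X : Matrix (Fin d) (Fin d) ℝ)
    (hXdef : X = Matrix.of fun i j => x i * x j - xb i * xb j)
    (hX : X.IsHermitian)
    (heig : (⨆ i, hX.eigenvalues i) = -c ^ 2 * (⨅ i, hX.eigenvalues i))
    (hip : |⟪x, xb⟫_ℝ| ≤ ε * ‖x‖ * ‖xb‖) :
    1 - (1 + c ^ 2) * (ε + ε ^ 2) ≤ c ^ 2 * ‖xb‖ ^ 2 / ‖x‖ ^ 2 ∧
      c ^ 2 * ‖xb‖ ^ 2 / ‖x‖ ^ 2 ≤ 1 + (1 + c ^ 2) * (ε + ε ^ 2) := by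
  obtain rfl : X = vecMulVec x x - vecMulVec xb xb := by
    rw [hXdef]; ext; simp [vecMulVec]
  have : Nonempty (Fin d) := ⟨⟨0, hd⟩⟩
  simp only [EuclideanSpace.real_norm_sq_eq_dotProduct]
  have hxpos : 0 < x ⬝ᵥ x := by
    simpa [EuclideanSpace.real_norm_sq_eq_dotProduct] using pow_pos (norm_pos_iff.mpr hx) 2
  have hxbpos : 0 < xb ⬝ᵥ xb := by
    simpa [EuclideanSpace.real_norm_sq_eq_dotProduct] using pow_pos (norm_pos_iff.mpr hxb) 2
  have hsq := EuclideanSpace.sq_dotProduct_le_of_abs_inner_le hip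
  have hsab : (x ⬝ᵥ xb) ^ 2 < (x ⬝ᵥ x) * (xb ⬝ᵥ xb) :=
    hsq.trans_lt (mul_lt_of_lt_one_left (mul_pos hxpos hxbpos) (by nlinarith))
  have hdiff := abs_sq_mul_sub_le_of_add_eq
    (hX.vecMulVec_sub_vecMulVec_iSup_add_iInf_eigenvalues hsab) heig
    (hX.vecMulVec_sub_vecMulVec_iSup_eigenvalues_le hsab)
  have hgap : x ⬝ᵥ x - ⨆ i, hX.eigenvalues i ≤ (ε + ε ^ 2) * (x ⬝ᵥ x) := by
    nlinarith [hX.vecMulVec_sub_vecMulVec_mul_sub_iSup_eigenvalues_le hsab,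
      mul_nonneg hε0 hxpos.le]
  have hbound := abs_le.mp (hdiff.trans (mul_le_mul_of_nonneg_left hgap (by positivity)))
  rw [le_div_iff₀ hxpos, div_le_iff₀ hxpos]
  constructor <;> linarith

/-- If `λ_max(X) = -c²·λ_min(X)` for `X = x xᵀ - xb xbᵀ` and `x, xb` are nearly
orthogonal, then `‖x‖ ≈ c‖xb‖`. -/
theorem near_orthogonal_norm_ratio {d : ℕ} (hd : 0 < d) (ε c : ℝ)
    (hε0 : 0 ≤ ε) (hε : ε < 1 / 3) (hc : 0 < c)
    (x xb : EuclideanSpace ℝ (Fin d)) (hx : x ≠ 0) (hxb : xb ≠ 0)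
    (X : Matrix (Fin d) (Fin d) ℝ)
    (hXdef : X = Matrix.of fun i j => x i * x j - xb i * xb j)
    (hX : X.IsHermitian)
    (heig : (⨆ i, hX.eigenvalues i) = -c ^ 2 * (⨅ i, hX.eigenvalues i))
    (hip : |⟪x, xb⟫_ℝ| ≤ ε * ‖x‖ * ‖xb‖) :
    1 - (1 + c ^ 2) * (ε + ε ^ 2) ≤ c ^ 2 * ‖xb‖ ^ 2 / ‖x‖ ^ 2 ∧
      c ^ 2 * ‖xb‖ ^ 2 / ‖x‖ ^ 2 ≤ 1 + (1 + c ^ 2) * (ε + ε ^ 2) :=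
  near_orthogonal_norm_ratio_general hd ε c hε0 hε x xb hx hxb X hXdef hX heig hip
end

section
/- For 0 ≤ ε < 1: define c₁(ε), c₂(ε) > 0 as the unique solutions of (π/4)(1-ε) = c₁/(1+c₁²) + arctan(c₁) and (π/4)(1+ε) = c₂/(1+c₂²) + arctan(c₂). Then for 0 < ε < 1/2, c₂(ε) - c₁(ε) ≤ 5πε. -/
/-! Since `ω' = 2 / (1 + c²)²` is at least `1/2` on `[-1, 1]`, `ω` expands distances there by a
factor of at least `1/2`. Both `c₁` and `c₂` lie in `[0, 1]`, because
`ω 1 = 1/2 + π/4 > 3π/8 ≥ (π/4)(1 + ε)`; hence `c₂ - c₁ ≤ 2 (ω c₂ - ω c₁) = π ε`. -/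

open Real Set

noncomputable def ω (c : ℝ) : ℝ := c / (1 + c ^ 2) + arctan c

theorem hasDerivAt_ω (x : ℝ) : HasDerivAt ω (2 / (1 + x ^ 2) ^ 2) x := by
  have hden : (1 : ℝ) + x ^ 2 ≠ 0 := by positivity
  have hquot : HasDerivAt (fun c : ℝ => c / (1 + c ^ 2))
      ((1 * (1 + x ^ 2) - x * (2 * x)) / (1 + x ^ 2) ^ 2) x :=
    (hasDerivAt_id x).div (by simpa using (hasDerivAt_pow 2 x).const_add 1) hden
  refine (hquot.add (hasDerivAt_arctan x)).congr_deriv ?_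
  field_simp
  ring

theorem differentiable_ω : Differentiable ℝ ω := fun x => (hasDerivAt_ω x).differentiableAt

theorem ω_strictMono : StrictMono ω :=
  strictMono_of_deriv_pos fun x => by rw [(hasDerivAt_ω x).deriv]; positivity

theorem ω_one : ω 1 = 1 / 2 + π / 4 := by
  norm_num [ω, arctan_one]

theorem mul_sub_le_ω_sub {M a b : ℝ} (ha : a ∈ Icc (-M) M) (hb : b ∈ Icc (-M) M) (hab : a ≤ b) :
    2 / (1 + M ^ 2) ^ 2 * (b - a) ≤ ω b - ω a := by
  refine (convex_Icc (-M) M).mul_sub_le_image_sub_of_le_deriv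
    differentiable_ω.continuous.continuousOn differentiable_ω.differentiableOn (fun x hx => ?_) a ha b hb hab
  rw [interior_Icc] at hx
  rw [(hasDerivAt_ω x).deriv]
  have hx2 : x ^ 2 ≤ M ^ 2 := sq_le_sq' hx.1.le hx.2.le
  gcongr

theorem c_two_minus_c_one_bound_general (ε : ℝ) (hε0 : 0 < ε) (hε : ε < 1 / 2)
    (c₁ c₂ : ℝ) (hc₁0 : 0 < c₁)
    (hc₁ : Real.pi / 4 * (1 - ε) = c₁ / (1 + c₁ ^ 2) + Real.arctan c₁)
    (hc₂ : Real.pi / 4 * (1 + ε) = c₂ / (1 + c₂ ^ 2) + Real.arctan c₂) :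
    c₂ - c₁ ≤ 5 * Real.pi * ε := by
  change π / 4 * (1 - ε) = ω c₁ at hc₁
  change π / 4 * (1 + ε) = ω c₂ at hc₂
  have hc₁c₂ : c₁ ≤ c₂ := ω_strictMono.le_iff_le.mp (by nlinarith [pi_pos])
  have hc₂1 : c₂ ≤ 1 := ω_strictMono.le_iff_le.mp (by rw [ω_one]; nlinarith [pi_le_four])
  have hlip : 1 / 2 * (c₂ - c₁) ≤ ω c₂ - ω c₁ := by
    convert mul_sub_le_ω_sub (M := 1) ⟨by linarith, by linarith⟩ ⟨by linarith, hc₂1⟩ hc₁c₂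
      using 2
    norm_num
  nlinarith [pi_pos]

/-- If `c₁, c₂ > 0` solve `(π/4)(1-ε) = ω(c₁)` and `(π/4)(1+ε) = ω(c₂)` with
`ω(c) = c/(1+c²) + arctan c`, then for `0 < ε < 1/2` one has `c₂ - c₁ ≤ 5πε`. -/
theorem c_two_minus_c_one_bound (ε : ℝ) (hε0 : 0 < ε) (hε : ε < 1 / 2)
    (c₁ c₂ : ℝ) (hc₁0 : 0 < c₁) (hc₂0 : 0 < c₂)
    (hc₁ : Real.pi / 4 * (1 - ε) = c₁ / (1 + c₁ ^ 2) + Real.arctan c₁)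
    (hc₂ : Real.pi / 4 * (1 + ε) = c₂ / (1 + c₂ ^ 2) + Real.arctan c₂) :
    c₂ - c₁ ≤ 5 * Real.pi * ε :=
  c_two_minus_c_one_bound_general ε hε0 hε c₁ c₂ hc₁0 hc₁ hc₂
end

section
/- Let g(x) = f_λ(xx^T - x̄x̄^T) where f: ℝ^d → ℝ is symmetric convex and f_λ(X) = f(λ(X)) is the induced spectral function on symmetric matrices. Suppose there exists κ > 0 with g(x) - g(x̄) ≥ κ‖x-x̄‖‖x+x̄‖ for all x. Then for any x ∉ {x̄, -x̄} and any V ∈ ∂f_λ(X) (with X = xx^T - x̄x̄^T), one has max{|λ₁(V)|, |λ_d(V)|} ≥ κ/2, where λ₁(V), λ_d(V) are the largest and smallest eigenvalues of V. -/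
/-! The subgradient inequality at `0 = λ(x̄x̄ᵀ - x̄x̄ᵀ)` gives `g(x) - g(x̄) ≤ ⟨λ(V), λ(X)⟩`.
If `u_i` are the columns of the common eigenbasis `U`, then
`λ_i(X) = uᵢᵀXuᵢ = ⟨uᵢ, x - x̄⟩⟨uᵢ, x + x̄⟩`, so by Cauchy–Schwarz and orthogonality of `U`,
`⟨λ(V), λ(X)⟩ ≤ maxᵢ |λᵢ(V)| ‖x - x̄‖‖x + x̄‖`. Sharpness then forces
`κ ≤ max{|λ₁(V)|, |λ_d(V)|}`, since `‖x - x̄‖‖x + x̄‖ > 0` for `x ∉ {±x̄}`. -/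

open scoped InnerProductSpace Matrix

/-- The matrix `X = x xᵀ - xb xbᵀ`. -/
def phaseMatrix {d : ℕ} (x xb : EuclideanSpace ℝ (Fin d)) : Matrix (Fin d) (Fin d) ℝ :=
  Matrix.of fun i j => x i * x j - xb i * xb j

theorem phaseMatrix_isHermitian {d : ℕ} (x xb : EuclideanSpace ℝ (Fin d)) :
    (phaseMatrix x xb).IsHermitian := by
  unfold Matrix.IsHermitian
  ext i j
  simp [phaseMatrix, Matrix.conjTranspose_apply, mul_comm]

/-- The spectral composite objective `g(x) = f(λ(x xᵀ - xb xbᵀ))`. -/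
noncomputable def spectralObj {d : ℕ} (f : (Fin d → ℝ) → ℝ)
    (xb : EuclideanSpace ℝ (Fin d)) (x : EuclideanSpace ℝ (Fin d)) : ℝ :=
  f ((phaseMatrix_isHermitian x xb).eigenvalues)

open Matrix Polynomial

lemma abs_le_max_abs_ciSup_abs_ciInf {ι : Type*} [Finite ι] (v : ι → ℝ) (i : ι) :
    |v i| ≤ max |⨆ j, v j| |⨅ j, v j| :=
  max_comm |⨅ j, v j| _ ▸ abs_le_max_abs_abs
    (ciInf_le (Set.finite_range v).bddBelow i) (le_ciSup (Set.finite_range v).bddAbove i)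

lemma apply_eq_of_map_univ_val_eq {α β : Type*} [LinearOrder α] {d : ℕ} {f : (Fin d → α) → β}
    (hf : ∀ σ : Equiv.Perm (Fin d), ∀ z, f (z ∘ σ) = f z) {a b : Fin d → α}
    (h : Finset.univ.val.map a = Finset.univ.val.map b) : f a = f b := by
  have hperm : (List.ofFn (a ∘ Tuple.sort a)).Perm (List.ofFn (b ∘ Tuple.sort b)) := by
    refine ((Tuple.sort a).ofFn_comp_perm a).trans (List.Perm.trans ?_
      ((Tuple.sort b).ofFn_comp_perm b).symm)
    rw [← Multiset.coe_eq_coe]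
    simpa only [Fin.univ_val_map] using h
  have hsorted : a ∘ Tuple.sort a = b ∘ Tuple.sort b :=
    List.ofFn_injective <| hperm.eq_of_sortedLE
      (Tuple.monotone_sort a).sortedLE_ofFn (Tuple.monotone_sort b).sortedLE_ofFn
  rw [← hf (Tuple.sort a) a, hsorted, hf]

lemma sum_mul_mul_le_of_abs_le {n : Type*} [Fintype n] {c a b : n → ℝ} {M : ℝ} (hM : 0 ≤ M)
    (hc : ∀ i, |c i| ≤ M) :
    ∑ i, c i * (a i * b i) ≤ M * (√(∑ i, a i ^ 2) * √(∑ i, b i ^ 2)) :=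
  calc ∑ i, c i * (a i * b i) ≤ ∑ i, M * (|a i| * |b i|) := by
        refine Finset.sum_le_sum fun i _ => ?_
        calc c i * (a i * b i) ≤ |c i| * (|a i| * |b i|) := by
              rw [← abs_mul, ← abs_mul]
              exact le_abs_self _
          _ ≤ M * (|a i| * |b i|) := by gcongr; exact hc i
    _ = M * ∑ i, |a i| * |b i| := by rw [Finset.mul_sum]
    _ ≤ M * (√(∑ i, a i ^ 2) * √(∑ i, b i ^ 2)) := by
        gcongr
        simpa only [sq_abs] using Real.sum_mul_le_sqrt_mul_sqrt Finset.univ (|a ·|) (|b ·|)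

section Orthogonal

variable {n : Type*} [Fintype n] [DecidableEq n] {U : Matrix n n ℝ}

lemma charpoly_conj_orthogonal (hU : U ∈ orthogonalGroup n ℝ) (A : Matrix n n ℝ) :
    (U * A * Uᵀ).charpoly = A.charpoly := by
  rw [charpoly_mul_comm, ← Matrix.mul_assoc, (mem_orthogonalGroup_iff' n ℝ).mp hU, Matrix.one_mul]

lemma Matrix.IsHermitian.map_eigenvalues_eq_of_eq_conj {A : Matrix n n ℝ} (hA : A.IsHermitian)
    (hU : U ∈ orthogonalGroup n ℝ) {l : n → ℝ} (h : A = U * diagonal l * Uᵀ) :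
    Finset.univ.val.map hA.eigenvalues = Finset.univ.val.map l := by
  subst h
  have hroots := hA.roots_charpoly_eq_eigenvalues
  rw [charpoly_conj_orthogonal hU, charpoly_diagonal, roots_prod _ _ (by
    simp [Finset.prod_ne_zero_iff, X_sub_C_ne_zero])] at hroots
  simpa using hroots.symm

lemma sum_transpose_mulVec_sq (hU : U ∈ orthogonalGroup n ℝ) (v : n → ℝ) :
    ∑ i, (Uᵀ *ᵥ v) i ^ 2 = ∑ i, v i ^ 2 := by
  have h : (Uᵀ *ᵥ v) ⬝ᵥ (Uᵀ *ᵥ v) = v ⬝ᵥ v := by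
    rw [dotProduct_mulVec, vecMul_transpose, mulVec_mulVec, (mem_orthogonalGroup_iff n ℝ).mp hU,
      one_mulVec, dotProduct_comm]
  simpa only [dotProduct, sq] using h

end Orthogonal

section PhaseMatrix

variable {d : ℕ} {x xb : EuclideanSpace ℝ (Fin d)} {U : Matrix (Fin d) (Fin d) ℝ}

lemma phaseMatrix_eq_sub_vecMulVec (x xb : EuclideanSpace ℝ (Fin d)) :
    phaseMatrix x xb = vecMulVec x.ofLp x.ofLp - vecMulVec xb.ofLp xb.ofLp := by
  ext i j
  simp [phaseMatrix, vecMulVec_apply]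

lemma eigenvalue_eq_of_phaseMatrix_eq (hU : U ∈ orthogonalGroup (Fin d) ℝ)
    {l : Fin d → ℝ} (h : phaseMatrix x xb = U * diagonal l * Uᵀ) (i : Fin d) :
    l i = (Uᵀ *ᵥ (x - xb).ofLp) i * (Uᵀ *ᵥ (x + xb).ofLp) i := by
  have hUU := (mem_orthogonalGroup_iff' (Fin d) ℝ).mp hU
  have hdiag : diagonal l = Uᵀ * phaseMatrix x xb * U := by
    rw [h, ← Matrix.mul_assoc, ← Matrix.mul_assoc, hUU, Matrix.one_mul, Matrix.mul_assoc, hUU,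
      Matrix.mul_one]
  have := congrFun (congrFun hdiag i) i
  rw [phaseMatrix_eq_sub_vecMulVec, Matrix.mul_sub, Matrix.sub_mul, mul_vecMulVec, mul_vecMulVec,
    vecMulVec_mul, vecMulVec_mul] at this
  simp only [diagonal_apply_eq, ← mulVec_transpose, Matrix.sub_apply, vecMulVec_apply] at this
  rw [this, WithLp.ofLp_sub, WithLp.ofLp_add, mulVec_sub, mulVec_add, Pi.sub_apply, Pi.add_apply]
  ring

lemma sum_mul_le_of_phaseMatrix_eq (hU : U ∈ orthogonalGroup (Fin d) ℝ) {l c : Fin d → ℝ}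
    (h : phaseMatrix x xb = U * diagonal l * Uᵀ) {M : ℝ} (hM : 0 ≤ M) (hc : ∀ i, |c i| ≤ M) :
    ∑ i, c i * l i ≤ M * (‖x - xb‖ * ‖x + xb‖) := by
  simp only [eigenvalue_eq_of_phaseMatrix_eq hU h]
  refine (sum_mul_mul_le_of_abs_le hM hc).trans_eq ?_
  simp only [sum_transpose_mulVec_sq hU, EuclideanSpace.norm_eq, Real.norm_eq_abs, sq_abs]

lemma spectralObj_eq_of_phaseMatrix_eq {f : (Fin d → ℝ) → ℝ}
    (hf : ∀ σ : Equiv.Perm (Fin d), ∀ z, f (z ∘ σ) = f z) (hU : U ∈ orthogonalGroup (Fin d) ℝ)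
    {l : Fin d → ℝ} (h : phaseMatrix x xb = U * diagonal l * Uᵀ) :
    spectralObj f xb x = f l :=
  apply_eq_of_map_univ_val_eq hf <|
    (phaseMatrix_isHermitian x xb).map_eigenvalues_eq_of_eq_conj hU h

lemma spectralObj_self (f : (Fin d → ℝ) → ℝ) (xb : EuclideanSpace ℝ (Fin d)) :
    spectralObj f xb xb = f 0 := by
  rw [spectralObj, (phaseMatrix_isHermitian xb xb).eigenvalues_eq_zero_iff.mpr]
  ext i j
  simp [phaseMatrix]

end PhaseMatrix

theorem spectral_subgradient_eigenvalue_lower_bound_general {d : ℕ}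
    (f : (Fin d → ℝ) → ℝ)
    (hsymm : ∀ σ : Equiv.Perm (Fin d), ∀ z : Fin d → ℝ, f (z ∘ σ) = f z)
    (xb : EuclideanSpace ℝ (Fin d)) (κ : ℝ)
    (hsharp : ∀ y, spectralObj f xb y - spectralObj f xb xb ≥ κ * ‖y - xb‖ * ‖y + xb‖)
    (x : EuclideanSpace ℝ (Fin d)) (hx1 : x ≠ xb) (hx2 : x ≠ -xb)
    (U : Matrix (Fin d) (Fin d) ℝ) (hU : U ∈ Matrix.orthogonalGroup (Fin d) ℝ)
    (lX lV : Fin d → ℝ)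
    (hdecX : phaseMatrix x xb = U * Matrix.diagonal lX * Uᵀ)
    (hsub : ∀ z : Fin d → ℝ, f z ≥ f lX + ∑ i, lV i * (z i - lX i)) :
    κ / 2 ≤ max |⨆ i, lV i| |⨅ i, lV i| := by
  set M := max |⨆ i, lV i| |⨅ i, lV i|
  set s := ‖x - xb‖ * ‖x + xb‖
  have hM : 0 ≤ M := (abs_nonneg _).trans (le_max_left _ _)
  have hs : 0 < s := mul_pos (norm_pos_iff.mpr (sub_ne_zero.mpr hx1))
    (norm_pos_iff.mpr fun h => hx2 (eq_neg_of_add_eq_zero_left h))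
  have hκM : κ * s ≤ M * s :=
    calc κ * s ≤ spectralObj f xb x - spectralObj f xb xb := by rw [← mul_assoc]; exact hsharp x
      _ = f lX - f 0 := by rw [spectralObj_eq_of_phaseMatrix_eq hsymm hU hdecX, spectralObj_self]
      _ ≤ ∑ i, lV i * lX i := by
          have h0 := hsub 0
          simp only [Pi.zero_apply, zero_sub, mul_neg, Finset.sum_neg_distrib] at h0
          linarith
      _ ≤ M * s := sum_mul_le_of_phaseMatrix_eq hU hdecX hM (abs_le_max_abs_ciSup_abs_ciInf lV)
  linarith [le_of_mul_le_mul_right hκM hs]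

/-- If `g = f_λ(x xᵀ - xb xbᵀ)` is sharp with constant `κ`, then for `x ∉ {±xb}` and any
`V ∈ ∂f_λ(X)` (presented by a simultaneous ordered spectral decomposition with `X` and a
convex subgradient inclusion `λ(V) ∈ ∂f(λ(X))`), the extreme eigenvalues of `V` satisfy
`max{|λ₁(V)|, |λ_d(V)|} ≥ κ/2`. -/
theorem spectral_subgradient_eigenvalue_lower_bound {d : ℕ} (hd : 0 < d)
    (f : (Fin d → ℝ) → ℝ) (hconv : ConvexOn ℝ Set.univ f)
    (hsymm : ∀ σ : Equiv.Perm (Fin d), ∀ z : Fin d → ℝ, f (z ∘ σ) = f z)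
    (xb : EuclideanSpace ℝ (Fin d)) (κ : ℝ) (hκ : 0 < κ)
    (hsharp : ∀ y, spectralObj f xb y - spectralObj f xb xb ≥ κ * ‖y - xb‖ * ‖y + xb‖)
    (x : EuclideanSpace ℝ (Fin d)) (hx1 : x ≠ xb) (hx2 : x ≠ -xb)
    (U : Matrix (Fin d) (Fin d) ℝ) (hU : U ∈ Matrix.orthogonalGroup (Fin d) ℝ)
    (lX lV : Fin d → ℝ) (hlX : Antitone lX) (hlV : Antitone lV)
    (hdecX : phaseMatrix x xb = U * Matrix.diagonal lX * Uᵀ)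
    (V : Matrix (Fin d) (Fin d) ℝ) (hdecV : V = U * Matrix.diagonal lV * Uᵀ)
    (hsub : ∀ z : Fin d → ℝ, f z ≥ f lX + ∑ i, lV i * (z i - lX i)) :
    κ / 2 ≤ max |⨆ i, lV i| |⨅ i, lV i| :=
  spectral_subgradient_eigenvalue_lower_bound_general f hsymm xb κ hsharp x hx1 hx2 U hU lX lV hdecX
    hsub
end
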